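/- arXiv:2505.22603 — 5 statements merged into one kernel-verified Lean document; each statement's English description precedes it below -/
import Mathlib

section
/- Let L be a finite subset of X, and let A be a family of 2|L|+1 pairwise disjoint nonempty good subsets of X. Then there exists b ∈ A such that no endpoint of b lies in L, i.e., Im(seq_b) ∩ L = ∅. -/
open Set

/-- `X = [0,1) ∩ ℚ`, represented as a set of rationals. -/
def Xset : Set ℚ := {x | 0 ≤ x ∧ x < 1}

/-- `X ∪ {1}`, the possible endpoints. -/
def Eset : Set ℚ := Xset ∪ {1}

/-- `f` (restricted to `{0,…,2n-1}`) is an increasing sequence of endpoints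
representing `a` as a union of half-open intervals `[f(2i), f(2i+1))`. -/
def IsGoodSeq (n : ℕ) (f : ℕ → ℚ) (a : Set ℚ) : Prop :=
  (∀ i < 2 * n, f i ∈ Eset) ∧
  (∀ i j : ℕ, i < j → j < 2 * n → f i < f j) ∧
  (∀ x ∈ Xset, (x ∈ a ↔ ∃ i < n, f (2 * i) ≤ x ∧ x < f (2 * i + 1)))

/-- A subset of `X` is good if it is a finite union of half-open intervals. -/
def IsGood (a : Set ℚ) : Prop := a ⊆ Xset ∧ ∃ n f, IsGoodSeq n f a

/-- The set of endpoints of a good set (the image of its endpoint sequence). -/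
def endpoints (a : Set ℚ) : Set ℚ :=
  {u | ∃ n f, IsGoodSeq n f a ∧ ∃ i < 2 * n, f i = u}

/-- A function `e` is finite-to-one on `X ∪ {1}`. -/
def FinToOne (e : ℚ → ℕ) : Prop := ∀ m : ℕ, {x ∈ Eset | e x = m}.Finite

/-- `int(a) = {e(u) : u ∈ Im(seq_a)}`, the interesting numbers of `a`. -/
def intS (e : ℚ → ℕ) (a : Set ℚ) : Set ℕ := e '' endpoints a

/-- `a` and `b` oscillate at `i`: for some side `k`, `i` belongs to `int` of that
side only, and the largest `j < i` lying in the symmetric difference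
`int(a) ∆ int(b)` (if any) belongs to the other side only. -/
def OscAt (e : ℚ → ℕ) (a b : Set ℚ) (i : ℕ) : Prop :=
  ∃ k : Bool,
    (i ∈ intS e (bif k then b else a) ∧ i ∉ intS e (bif k then a else b)) ∧
    ∀ j, j < i → j ∈ symmDiff (intS e a) (intS e b) →
      (∀ j', j < j' → j' < i → j' ∉ symmDiff (intS e a) (intS e b)) →
      (j ∈ intS e (bif k then a else b) ∧ j ∉ intS e (bif k then b else a))

/-- The oscillation of `a` and `b`: the number of `i` at which they oscillate. -/
noncomputable def osc (e : ℚ → ℕ) (a b : Set ℚ) : ℕ := {i | OscAt e a b i}.ncard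

/-- `C` is a Boolean subalgebra of the interval algebra of good subsets of `X`. -/
def IsSubalg (C : Set (Set ℚ)) : Prop :=
  (∀ a ∈ C, IsGood a) ∧ ∅ ∈ C ∧ Xset ∈ C ∧
  (∀ a ∈ C, ∀ b ∈ C, a ∪ b ∈ C) ∧
  (∀ a ∈ C, ∀ b ∈ C, a ∩ b ∈ C) ∧
  (∀ a ∈ C, Xset \ a ∈ C)

/-- `C` is atomless: every nonempty member properly contains a nonempty member. -/
def IsAtomlessAlg (C : Set (Set ℚ)) : Prop :=
  ∀ a ∈ C, a ≠ ∅ → ∃ b ∈ C, b ≠ ∅ ∧ b ⊂ a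

/-!
An endpoint `x` of a good set `a` is the left end of one of its intervals or the right end of one,
so `a` contains a one-sided punctured neighbourhood of `x`. Two disjoint sets cannot both contain
a right (or both a left) neighbourhood of the same point, because these filters are nontrivial.
Hence every point of `L` together with a side is charged to at most one member of `A`, and
`2 |L| + 1` members cannot all have an endpoint in `L`.
-/

open Filter Topology

lemma Set.PairwiseDisjoint.card_filter_mem_le_one {α : Type*} {A : Finset (Set α)}
    (hA : (A : Set (Set α)).PairwiseDisjoint id) (F : Filter α) [F.NeBot]
    [DecidablePred (· ∈ F)] :
    (A.filter (· ∈ F)).card ≤ 1 := by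
  refine Finset.card_le_one.2 fun a ha b hb => ?_
  rw [Finset.mem_filter] at ha hb
  by_contra hne
  have hdisj : Disjoint a b := hA ha.1 hb.1 hne
  exact empty_notMem F (hdisj.inter_eq ▸ inter_mem ha.2 hb.2)

theorem Set.PairwiseDisjoint.card_le_two_mul_card {α : Type*}
    [TopologicalSpace α] [LinearOrder α] [∀ x : α, (𝓝[>] x).NeBot] [∀ x : α, (𝓝[<] x).NeBot]
    {A : Finset (Set α)} (hA : (A : Set (Set α)).PairwiseDisjoint id) (L : Finset α)
    (hL : ∀ a ∈ A, ∃ x ∈ L, a ∈ 𝓝[>] x ∨ a ∈ 𝓝[<] x) :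
    A.card ≤ 2 * L.card := by
  classical
  have hcover : A ⊆ L.biUnion fun x => A.filter (· ∈ 𝓝[>] x) ∪ A.filter (· ∈ 𝓝[<] x) := by
    intro a ha
    obtain ⟨x, hxL, hx⟩ := hL a ha
    simpa [ha, hxL] using ⟨x, hxL, hx⟩
  calc A.card ≤ ∑ x ∈ L, (A.filter (· ∈ 𝓝[>] x) ∪ A.filter (· ∈ 𝓝[<] x)).card :=
        (Finset.card_le_card hcover).trans Finset.card_biUnion_le
    _ ≤ ∑ _x ∈ L, 2 := Finset.sum_le_sum fun x _ =>
        (Finset.card_union_le _ _).trans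
          (add_le_add (hA.card_filter_mem_le_one (𝓝[>] x)) (hA.card_filter_mem_le_one (𝓝[<] x)))
    _ = 2 * L.card := by rw [Finset.sum_const, smul_eq_mul, mul_comm]

lemma IsGoodSeq.Ioo_subset {n : ℕ} {f : ℕ → ℚ} {a : Set ℚ} (h : IsGoodSeq n f a) {k : ℕ}
    (hk : k < n) : Ioo (f (2 * k)) (f (2 * k + 1)) ⊆ a := by
  obtain ⟨hE, -, hmem⟩ := h
  have hEle : ∀ i < 2 * n, 0 ≤ f i ∧ f i ≤ 1 := by
    intro i hi
    rcases hE i hi with ⟨h0, h1⟩ | h1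
    · exact ⟨h0, h1.le⟩
    · rw [mem_singleton_iff.1 h1]; norm_num
  intro z hz
  have hzX : z ∈ Xset :=
    ⟨(hEle _ (by omega)).1.trans hz.1.le, hz.2.trans_le (hEle _ (by omega)).2⟩
  exact (hmem z hzX).2 ⟨k, hk, hz.1.le, hz.2⟩

lemma mem_nhdsGT_or_mem_nhdsLT_of_mem_endpoints {a : Set ℚ} {x : ℚ} (hx : x ∈ endpoints a) :
    a ∈ 𝓝[>] x ∨ a ∈ 𝓝[<] x := by
  obtain ⟨n, f, hf, i, hi, rfl⟩ := hx
  obtain ⟨k, rfl | rfl⟩ := Nat.even_or_odd' i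
  · have hlt : f (2 * k) < f (2 * k + 1) := hf.2.1 _ _ (by omega) (by omega)
    exact .inl (mem_of_superset (Ioo_mem_nhdsGT hlt) (hf.Ioo_subset (by omega)))
  · have hlt : f (2 * k) < f (2 * k + 1) := hf.2.1 _ _ (by omega) hi
    exact .inr (mem_of_superset (Ioo_mem_nhdsLT hlt) (hf.Ioo_subset (by omega)))

theorem exists_unblocked_general (L : Finset ℚ)
    (A : Finset (Set ℚ)) (hcard : A.card = 2 * L.card + 1)
    (hdisj : ∀ a ∈ A, ∀ b ∈ A, a ≠ b → a ∩ b = ∅) :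
    ∃ b ∈ A, endpoints b ∩ ↑L = ∅ := by
  by_contra! hblocked
  have hA : (A : Set (Set ℚ)).PairwiseDisjoint id := fun a ha b hb hab =>
    disjoint_iff_inter_eq_empty.2 (hdisj a ha b hb hab)
  have hL : ∀ a ∈ A, ∃ x ∈ L, a ∈ 𝓝[>] x ∨ a ∈ 𝓝[<] x := fun a ha =>
    let ⟨x, hxa, hxL⟩ := hblocked a ha
    ⟨x, hxL, mem_nhdsGT_or_mem_nhdsLT_of_mem_endpoints hxa⟩
  have := hA.card_le_two_mul_card L hL
  omega

/-- among `2|L|+1` pairwise disjoint nonempty good sets, some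
member has no endpoint in the finite set `L ⊆ X`. -/
theorem exists_unblocked (L : Finset ℚ) (hL : ↑L ⊆ Xset)
    (A : Finset (Set ℚ)) (hcard : A.card = 2 * L.card + 1)
    (hgood : ∀ a ∈ A, IsGood a ∧ a.Nonempty)
    (hdisj : ∀ a ∈ A, ∀ b ∈ A, a ≠ b → a ∩ b = ∅) :
    ∃ b ∈ A, endpoints b ∩ ↑L = ∅ :=
  exists_unblocked_general L A hcard hdisj
end

section
/- Each point x ∈ X ∪ {1} is an endpoint of at most two members of any pairwise disjoint family of nonempty good subsets of X; that is, for any pairwise disjoint family A of good sets, |{a ∈ A : x ∈ Im(seq_a)}| ≤ 2. -/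
open Set

/-!
An endpoint `x` of a good set `a` is either a left endpoint, and then `x ∈ a`, or a right
endpoint, and then `a` contains a left neighbourhood `(x - ε, x)`. Two disjoint sets cannot
share either property, and among three sets two share one of them.
-/

open Filter Topology

lemma Eset_subset_Icc : Eset ⊆ Icc 0 1 := by
  rintro z (⟨h0, h1⟩ | rfl)
  · exact ⟨h0, h1.le⟩
  · exact ⟨zero_le_one, le_rfl⟩

lemma IsGoodSeq.Ico_subset {n : ℕ} {f : ℕ → ℚ} {a : Set ℚ} (hf : IsGoodSeq n f a) {k : ℕ}
    (hk : k < n) : Ico (f (2 * k)) (f (2 * k + 1)) ⊆ a := by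
  obtain ⟨hE, -, hmem⟩ := hf
  rintro y ⟨hly, hyu⟩
  have hl : 0 ≤ f (2 * k) := (Eset_subset_Icc (hE (2 * k) (by omega))).1
  have hu : f (2 * k + 1) ≤ 1 := (Eset_subset_Icc (hE (2 * k + 1) (by omega))).2
  exact (hmem y ⟨hl.trans hly, hyu.trans_le hu⟩).2 ⟨k, hk, hly, hyu⟩

lemma mem_or_eventually_nhdsLT_of_mem_endpoints {a : Set ℚ} {x : ℚ} (hx : x ∈ endpoints a) :
    x ∈ a ∨ ∀ᶠ y in 𝓝[<] x, y ∈ a := by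
  obtain ⟨n, f, hf, i, hi, rfl⟩ := hx
  rcases Nat.even_or_odd' i with ⟨k, rfl | rfl⟩
  · have hlt : f (2 * k) < f (2 * k + 1) := hf.2.1 _ _ (lt_add_one _) (by omega)
    exact .inl (hf.Ico_subset (by omega) ⟨le_rfl, hlt⟩)
  · have hlt : f (2 * k) < f (2 * k + 1) := hf.2.1 _ _ (lt_add_one _) hi
    refine .inr (mem_of_superset (Ioo_mem_nhdsLT hlt) ?_)
    exact Ioo_subset_Ico_self.trans (hf.Ico_subset (by omega))

lemma inter_nonempty_of_mem_endpoints {a b : Set ℚ} {x : ℚ} (ha : x ∈ endpoints a)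
    (hb : x ∈ endpoints b) (hab : x ∈ a ↔ x ∈ b) : (a ∩ b).Nonempty := by
  rcases mem_or_eventually_nhdsLT_of_mem_endpoints ha with hxa | hla <;>
    rcases mem_or_eventually_nhdsLT_of_mem_endpoints hb with hxb | hlb
  · exact ⟨x, hxa, hxb⟩
  · exact ⟨x, hxa, hab.1 hxa⟩
  · exact ⟨x, hab.2 hxb, hxb⟩
  · exact (hla.and hlb).exists

theorem endpoint_blocks_at_most_two_general (x : ℚ)
    (A : Set (Set ℚ))
    (hdisj : ∀ a ∈ A, ∀ b ∈ A, a ≠ b → a ∩ b = ∅) :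
    ∀ a ∈ A, ∀ b ∈ A, ∀ c ∈ A,
      x ∈ endpoints a → x ∈ endpoints b → x ∈ endpoints c →
      a = b ∨ a = c ∨ b = c := by
  intro a ha b hb c hc hxa hxb hxc
  have eq_of_iff : ∀ s ∈ A, ∀ t ∈ A, x ∈ endpoints s → x ∈ endpoints t →
      (x ∈ s ↔ x ∈ t) → s = t := fun s hs t ht hxs hxt hst => by
    by_contra hne
    exact (inter_nonempty_of_mem_endpoints hxs hxt hst).ne_empty (hdisj s hs t ht hne)
  have pigeonhole : (x ∈ a ↔ x ∈ b) ∨ (x ∈ a ↔ x ∈ c) ∨ (x ∈ b ↔ x ∈ c) := by tauto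
  exact pigeonhole.imp (eq_of_iff a ha b hb hxa hxb) <|
    Or.imp (eq_of_iff a ha c hc hxa hxc) (eq_of_iff b hb c hc hxb hxc)

/-- a point of `X ∪ {1}` is an endpoint of at most two members of
a pairwise disjoint family of nonempty good sets. -/
theorem endpoint_blocks_at_most_two (x : ℚ) (hx : x ∈ Eset)
    (A : Set (Set ℚ)) (hgood : ∀ a ∈ A, IsGood a ∧ a.Nonempty)
    (hdisj : ∀ a ∈ A, ∀ b ∈ A, a ≠ b → a ∩ b = ∅) :
    ∀ a ∈ A, ∀ b ∈ A, ∀ c ∈ A,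
      x ∈ endpoints a → x ∈ endpoints b → x ∈ endpoints c →
      a = b ∨ a = c ∨ b = c :=
  endpoint_blocks_at_most_two_general x A hdisj
end

section
/- (Oscillation increment lemma) Let C be a countable atomless Boolean subalgebra of the interval algebra B. For every nonempty a, b ∈ C there exist a', b' ∈ C with a' ⊆ a, b' ⊆ b, and osc(a', b') = osc(a, b) + 1. -/
open Set

/-!
A point `p` is a left end of `s` if `p ∈ s` while `s` omits a left neighbourhood of `p`, and a
right end if `p ∉ s` while `s` contains one. For a good set these are exactly the terms of any
representing sequence, so `int` is intrinsic, and the ends of a disjoint union of good sets with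
disjoint ends are the ends of the pieces.

Since `e` is finite-to-one, only finitely many points have `e`-value at most `M`, and each point is
an end of at most two of a sequence of pairwise disjoint sets; as an atomless algebra splits any
nonempty member into infinitely many disjoint nonempty members, one of them has all its ends of
`e`-value above `M`. Choosing `t` such pieces alternately inside `a` and inside `b`, each above all
`e`-values of the previous one, and letting `a'` (`b'`) be the union of the pieces inside `a`
(inside `b`), the sets `int a'` and `int b'` consist of `t` alternating blocks. The pair then
oscillates exactly at the least element of each block, so `osc e a' b' = t`, for every `t`.
-/

open Filter Function Topology

section Ends

variable {α : Type*} [TopologicalSpace α] [Preorder α]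

def IsLeftEnd (s : Set α) (p : α) : Prop := p ∈ s ∧ sᶜ ∈ 𝓝[<] p

def IsRightEnd (s : Set α) (p : α) : Prop := p ∉ s ∧ s ∈ 𝓝[<] p

def ends (s : Set α) : Set α := {p | IsLeftEnd s p ∨ IsRightEnd s p}

/-- The indicator function of `s` has a left limit at every point. -/
def HasLeftLimits (s : Set α) : Prop := ∀ p, s ∈ 𝓝[<] p ∨ sᶜ ∈ 𝓝[<] p

theorem HasLeftLimits.union {s t : Set α} (hs : HasLeftLimits s) (ht : HasLeftLimits t) :
    HasLeftLimits (s ∪ t) := by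
  intro p
  rcases hs p with hs | hs
  · exact Or.inl (mem_of_superset hs subset_union_left)
  rcases ht p with ht | ht
  · exact Or.inl (mem_of_superset ht subset_union_right)
  · exact Or.inr (compl_union s t ▸ inter_mem hs ht)

theorem ends_union_subset {s t : Set α} (hs : HasLeftLimits s) :
    ends (s ∪ t) ⊆ ends s ∪ ends t := by
  rintro p (⟨hp, hc⟩ | ⟨hp, hst⟩)
  · rw [compl_union] at hc
    rcases hp with hp | hp
    · exact Or.inl (Or.inl ⟨hp, mem_of_superset hc inter_subset_left⟩)
    · exact Or.inr (Or.inl ⟨hp, mem_of_superset hc inter_subset_right⟩)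
  · rw [mem_union, not_or] at hp
    rcases hs p with hsp | hsp
    · exact Or.inl (Or.inr ⟨hp.1, hsp⟩)
    · exact Or.inr (Or.inr ⟨hp.2, mem_of_superset (inter_mem hst hsp)
        fun x hx => hx.1.resolve_left hx.2⟩)

theorem ends_subset_ends_union {s t : Set α} (ht : HasLeftLimits t) (hst : Disjoint s t)
    (hends : Disjoint (ends s) (ends t)) : ends s ⊆ ends (s ∪ t) := by
  rintro p (⟨hp, hc⟩ | ⟨hp, hs⟩)
  · rcases ht p with htp | htp
    · exact absurd (Or.inr ⟨disjoint_left.1 hst hp, htp⟩)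
        (disjoint_left.1 hends (Or.inl ⟨hp, hc⟩))
    · exact Or.inl ⟨Or.inl hp, compl_union s t ▸ inter_mem hc htp⟩
  · have hpt : p ∉ t := fun hpt => disjoint_left.1 hends (Or.inr ⟨hp, hs⟩)
      (Or.inl ⟨hpt, mem_of_superset hs hst.subset_compl_right⟩)
    exact Or.inr ⟨fun h => h.elim hp hpt, mem_of_superset hs subset_union_left⟩

theorem ends_union {s t : Set α} (hs : HasLeftLimits s) (ht : HasLeftLimits t)
    (hst : Disjoint s t) (hends : Disjoint (ends s) (ends t)) :
    ends (s ∪ t) = ends s ∪ ends t :=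
  (ends_union_subset hs).antisymm <| union_subset (ends_subset_ends_union ht hst hends)
    (union_comm s t ▸ ends_subset_ends_union hs hst.symm hends.symm)

theorem subsingleton_isLeftEnd {ι : Type*} {d : ι → Set α} (hd : Pairwise (Disjoint on d))
    (p : α) : {i | IsLeftEnd (d i) p}.Subsingleton := fun _ hi _ hj =>
  by_contra fun hij => disjoint_left.1 (hd hij) hi.1 hj.1

theorem subsingleton_isRightEnd {ι : Type*} {d : ι → Set α} (hd : Pairwise (Disjoint on d))
    (p : α) [(𝓝[<] p).NeBot] : {i | IsRightEnd (d i) p}.Subsingleton := fun _ hi _ hj =>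
  by_contra fun hij =>
    let ⟨_, hxi, hxj⟩ := Filter.nonempty_of_mem (inter_mem hi.2 hj.2)
    disjoint_left.1 (hd hij) hxi hxj

theorem ends_empty [∀ p : α, (𝓝[<] p).NeBot] : ends (∅ : Set α) = ∅ :=
  eq_empty_of_forall_notMem fun _ hp => hp.elim (fun h => h.1) fun h => empty_notMem _ h.2

theorem HasLeftLimits.biUnion {ι : Type*} {d : ι → Set α} {S : Finset ι}
    (h : ∀ i ∈ S, HasLeftLimits (d i)) : HasLeftLimits (⋃ i ∈ S, d i) := by
  classical
  induction S using Finset.induction_on with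
  | empty => simp [HasLeftLimits]
  | insert j S _ ih =>
    rw [Finset.set_biUnion_insert]
    exact (h j (Finset.mem_insert_self j S)).union
      (ih fun i hi => h i (Finset.mem_insert_of_mem hi))

theorem ends_biUnion [∀ p : α, (𝓝[<] p).NeBot] {ι : Type*} {d : ι → Set α} {S : Finset ι}
    (h : ∀ i ∈ S, HasLeftLimits (d i)) (hd : (S : Set ι).PairwiseDisjoint d)
    (hends : (S : Set ι).PairwiseDisjoint (ends ∘ d)) :
    ends (⋃ i ∈ S, d i) = ⋃ i ∈ S, ends (d i) := by
  classical
  induction S using Finset.induction_on with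
  | empty => simp [ends_empty]
  | insert j S hj ih =>
    rw [Finset.coe_insert, pairwiseDisjoint_insert] at hd hends
    have hS : ∀ i ∈ S, HasLeftLimits (d i) := fun i hi => h i (Finset.mem_insert_of_mem hi)
    have hne : ∀ i ∈ S, j ≠ i := fun i hi hji => hj (hji ▸ hi)
    rw [Finset.set_biUnion_insert, Finset.set_biUnion_insert, ← ih hS hd.1 hends.1]
    refine ends_union (h j (Finset.mem_insert_self j S)) (HasLeftLimits.biUnion hS)
      (disjoint_iUnion₂_right.2 fun i hi => hd.2 i hi (hne i hi)) ?_
    rw [ih hS hd.1 hends.1]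
    exact disjoint_iUnion₂_right.2 fun i hi => hends.2 i hi (hne i hi)

end Ends

theorem mem_Icc_of_mem_Eset {p : ℚ} (hp : p ∈ Eset) : p ∈ Icc 0 1 := by
  rcases hp with ⟨h0, h1⟩ | rfl
  exacts [⟨h0, h1.le⟩, ⟨zero_le_one, le_rfl⟩]

namespace IsGoodSeq

variable {n : ℕ} {f : ℕ → ℚ} {s : Set ℚ}

theorem strictMonoOn (hf : IsGoodSeq n f s) : StrictMonoOn f (Iio (2 * n)) :=
  fun i _ j hj hij => hf.2.1 i j hij hj

theorem mem_iff (hs : s ⊆ Xset) (hf : IsGoodSeq n f s) (x : ℚ) :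
    x ∈ s ↔ ∃ m < n, f (2 * m) ≤ x ∧ x < f (2 * m + 1) := by
  refine ⟨fun hx => (hf.2.2 x (hs hx)).1 hx, fun ⟨m, hm, h1, h2⟩ => (hf.2.2 x ?_).2 ⟨m, hm, h1, h2⟩⟩
  exact ⟨(mem_Icc_of_mem_Eset (hf.1 _ (by omega))).1.trans h1,
    h2.trans_le (mem_Icc_of_mem_Eset (hf.1 _ (by omega))).2⟩

theorem eventually_mem_iff (hs : s ⊆ Xset) (hf : IsGoodSeq n f s) (p : ℚ) :
    ∀ᶠ x in 𝓝[<] p, x ∈ s ↔ ∃ m < n, f (2 * m) < p ∧ p ≤ f (2 * m + 1) := by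
  have hbelow : ∀ᶠ x in 𝓝[<] p, ∀ i ∈ Iio (2 * n), f i < p → f i < x :=
    (finite_Iio _).eventually_all.2 fun i _ => by
      by_cases hi : f i < p
      · filter_upwards [Ioo_mem_nhdsLT hi] with x hx using fun _ => hx.1
      · exact Eventually.of_forall fun _ h => absurd h hi
  filter_upwards [hbelow, self_mem_nhdsWithin] with x hx (hxp : x < p)
  rw [hf.mem_iff hs]
  refine exists_congr fun m => and_congr_right fun hm => and_congr
    ⟨fun h => h.trans_lt hxp, fun h => (hx _ (mem_Iio.2 (by omega)) h).le⟩
    ⟨fun h => not_lt.1 fun h' => lt_asymm (hx _ (mem_Iio.2 (by omega)) h') h,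
      fun h => hxp.trans_le h⟩

theorem mem_nhdsLT_iff (hs : s ⊆ Xset) (hf : IsGoodSeq n f s) (p : ℚ) :
    s ∈ 𝓝[<] p ↔ ∃ m < n, f (2 * m) < p ∧ p ≤ f (2 * m + 1) :=
  (eventually_congr (hf.eventually_mem_iff hs p)).trans eventually_const

theorem compl_mem_nhdsLT_iff (hs : s ⊆ Xset) (hf : IsGoodSeq n f s) (p : ℚ) :
    sᶜ ∈ 𝓝[<] p ↔ ¬∃ m < n, f (2 * m) < p ∧ p ≤ f (2 * m + 1) :=
  (eventually_congr ((hf.eventually_mem_iff hs p).mono fun _ => not_congr)).trans eventually_const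

theorem hasLeftLimits (hs : s ⊆ Xset) (hf : IsGoodSeq n f s) : HasLeftLimits s := fun p =>
  (em _).imp (hf.mem_nhdsLT_iff hs p).2 (hf.compl_mem_nhdsLT_iff hs p).2

theorem isLeftEnd_iff (hs : s ⊆ Xset) (hf : IsGoodSeq n f s) {p : ℚ} :
    IsLeftEnd s p ↔ ∃ l < n, f (2 * l) = p := by
  rw [IsLeftEnd, hf.mem_iff hs, hf.compl_mem_nhdsLT_iff hs]
  constructor
  · rintro ⟨⟨l, hl, h1, h2⟩, hnot⟩
    exact ⟨l, hl, h1.eq_of_not_lt fun h => hnot ⟨l, hl, h, h2.le⟩⟩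
  · rintro ⟨l, hl, rfl⟩
    refine ⟨⟨l, hl, le_rfl, hf.2.1 _ _ (by omega) (by omega)⟩, ?_⟩
    rintro ⟨m, hm, h1, h2⟩
    rw [hf.strictMonoOn.lt_iff_lt (mem_Iio.2 (by omega)) (mem_Iio.2 (by omega))] at h1
    rw [hf.strictMonoOn.le_iff_le (mem_Iio.2 (by omega)) (mem_Iio.2 (by omega))] at h2
    omega

theorem isRightEnd_iff (hs : s ⊆ Xset) (hf : IsGoodSeq n f s) {p : ℚ} :
    IsRightEnd s p ↔ ∃ l < n, f (2 * l + 1) = p := by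
  rw [IsRightEnd, hf.mem_iff hs, hf.mem_nhdsLT_iff hs]
  constructor
  · rintro ⟨hnot, l, hl, h1, h2⟩
    exact ⟨l, hl, (h2.eq_of_not_lt fun h => hnot ⟨l, hl, h1.le, h⟩).symm⟩
  · rintro ⟨l, hl, rfl⟩
    refine ⟨?_, l, hl, hf.2.1 _ _ (by omega) (by omega), le_rfl⟩
    rintro ⟨m, hm, h1, h2⟩
    rw [hf.strictMonoOn.le_iff_le (mem_Iio.2 (by omega)) (mem_Iio.2 (by omega))] at h1
    rw [hf.strictMonoOn.lt_iff_lt (mem_Iio.2 (by omega)) (mem_Iio.2 (by omega))] at h2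
    omega

theorem ends_eq (hs : s ⊆ Xset) (hf : IsGoodSeq n f s) : ends s = f '' Iio (2 * n) := by
  ext p
  simp only [ends, mem_ofPred_eq, hf.isLeftEnd_iff hs, hf.isRightEnd_iff hs, mem_image, mem_Iio]
  constructor
  · rintro (⟨l, hl, rfl⟩ | ⟨l, hl, rfl⟩)
    exacts [⟨2 * l, by omega, rfl⟩, ⟨2 * l + 1, by omega, rfl⟩]
  · rintro ⟨i, hi, rfl⟩
    obtain ⟨l, rfl | rfl⟩ := Nat.even_or_odd' i
    exacts [Or.inl ⟨l, by omega, rfl⟩, Or.inr ⟨l, by omega, rfl⟩]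

end IsGoodSeq

namespace IsGood

variable {s : Set ℚ}

theorem endpoints_eq (hs : IsGood s) : endpoints s = ends s := by
  obtain ⟨hX, n, f, hf⟩ := hs
  ext p
  constructor
  · rintro ⟨m, g, hg, i, hi, rfl⟩
    rw [hg.ends_eq hX]
    exact ⟨i, hi, rfl⟩
  · intro hp
    rw [hf.ends_eq hX] at hp
    obtain ⟨i, hi, rfl⟩ := hp
    exact ⟨n, f, hf, i, hi, rfl⟩

theorem intS_eq (e : ℚ → ℕ) (hs : IsGood s) : intS e s = e '' ends s := by
  rw [intS, hs.endpoints_eq]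

theorem hasLeftLimits (hs : IsGood s) : HasLeftLimits s :=
  let ⟨hX, _, _, hf⟩ := hs
  hf.hasLeftLimits hX

theorem ends_finite (hs : IsGood s) : (ends s).Finite := by
  obtain ⟨hX, n, f, hf⟩ := hs
  rw [hf.ends_eq hX]
  exact (finite_Iio _).image f

theorem ends_subset_Eset (hs : IsGood s) : ends s ⊆ Eset := by
  obtain ⟨hX, n, f, hf⟩ := hs
  rw [hf.ends_eq hX]
  rintro _ ⟨i, hi, rfl⟩
  exact hf.1 i hi

theorem ends_nonempty (hs : IsGood s) (hne : s.Nonempty) : (ends s).Nonempty := by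
  obtain ⟨hX, n, f, hf⟩ := hs
  obtain ⟨x, hx⟩ := hne
  obtain ⟨m, hm, -⟩ := (hf.mem_iff hX x).1 hx
  rw [hf.ends_eq hX]
  exact ⟨f 0, 0, mem_Iio.2 (by omega), rfl⟩

end IsGood

theorem FinToOne.finite_le {e : ℚ → ℕ} (he : FinToOne e) (M : ℕ) :
    {x ∈ Eset | e x ≤ M}.Finite :=
  ((finite_Iic M).biUnion fun m _ => he m).subset fun _ ⟨hx, hxM⟩ =>
    mem_biUnion (mem_Iic.2 hxM) ⟨hx, rfl⟩

namespace IsSubalg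

variable {C : Set (Set ℚ)}

theorem diff_mem (hC : IsSubalg C) {a b : Set ℚ} (ha : a ∈ C) (hb : b ∈ C) : a \ b ∈ C := by
  rw [← inter_eq_left.2 (hC.1 a ha).1, inter_sdiff_assoc]
  exact hC.2.2.2.2.1 _ ha _ (hC.2.2.2.2.2 b hb)

theorem biUnion_mem (hC : IsSubalg C) {ι : Type*} {d : ι → Set ℚ} (S : Finset ι)
    (h : ∀ i ∈ S, d i ∈ C) : ⋃ i ∈ S, d i ∈ C := by
  classical
  induction S using Finset.induction_on with
  | empty => simpa using hC.2.1
  | insert j S _ ih =>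
    rw [Finset.set_biUnion_insert]
    exact hC.2.2.2.1 _ (h j (Finset.mem_insert_self j S)) _
      (ih fun i hi => h i (Finset.mem_insert_of_mem hi))

theorem exists_pairwise_disjoint_seq (hC : IsSubalg C) (hCat : IsAtomlessAlg C) {c : Set ℚ}
    (hc : c ∈ C) (hne : c.Nonempty) :
    ∃ d : ℕ → Set ℚ, (∀ k, d k ∈ C ∧ (d k).Nonempty ∧ d k ⊆ c) ∧ Pairwise (Disjoint on d) := by
  have hsplit : ∀ x ∈ C, x.Nonempty → ∃ y ∈ C, y.Nonempty ∧ y ⊆ x ∧ (x \ y).Nonempty :=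
    fun x hx hxne =>
      let ⟨y, hy, hyne, hyx⟩ := hCat x hx hxne.ne_empty
      ⟨y, hy, nonempty_iff_ne_empty.2 hyne, hyx.1, sdiff_nonempty.2 hyx.2⟩
  choose! piece hpiece using hsplit
  let rest : ℕ → Set ℚ := fun k => (fun x => x \ piece x)^[k] c
  have hrest_succ : ∀ k, rest (k + 1) = rest k \ piece (rest k) := fun k =>
    Function.iterate_succ_apply' _ k c
  have hrest : ∀ k, rest k ∈ C ∧ (rest k).Nonempty := by
    intro k
    induction k with
    | zero => exact ⟨hc, hne⟩
    | succ k ih =>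
      obtain ⟨hpC, -, -, hdiff⟩ := hpiece _ ih.1 ih.2
      rw [hrest_succ]
      exact ⟨hC.diff_mem ih.1 hpC, hdiff⟩
  have hanti : Antitone rest := antitone_nat_of_succ_le fun k => hrest_succ k ▸ sdiff_subset
  refine ⟨fun k => piece (rest k), fun k => ?_, (pairwise_disjoint_on _).2 fun m k hmk => ?_⟩
  · obtain ⟨hpC, hpne, hpsub, -⟩ := hpiece _ (hrest k).1 (hrest k).2
    exact ⟨hpC, hpne, hpsub.trans (hanti (Nat.zero_le k))⟩
  · have hsub : piece (rest k) ⊆ rest (m + 1) :=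
      (hpiece _ (hrest k).1 (hrest k).2).2.2.1.trans (hanti hmk)
    rw [hrest_succ] at hsub
    exact disjoint_sdiff_right.mono_right hsub

/-- A point is an end of at most two of the disjoint pieces, so all but finitely many pieces
avoid the finite set `F`. -/
theorem exists_subset_disjoint_ends (hC : IsSubalg C) (hCat : IsAtomlessAlg C) {c : Set ℚ}
    (hc : c ∈ C) (hne : c.Nonempty) {F : Set ℚ} (hF : F.Finite) :
    ∃ d ∈ C, d ⊆ c ∧ d.Nonempty ∧ (c \ d).Nonempty ∧ Disjoint (ends d) F := by
  obtain ⟨d, hd, hdisj⟩ := exists_pairwise_disjoint_seq hC hCat hc hne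
  have hbad : {k | ¬Disjoint (ends (d k)) F}.Finite := by
    refine (hF.biUnion fun p _ => (subsingleton_isLeftEnd hdisj p).finite.union
      (subsingleton_isRightEnd hdisj p).finite).subset fun k hk => ?_
    obtain ⟨p, hpd, hpF⟩ := not_disjoint_iff.1 hk
    exact mem_biUnion hpF hpd
  obtain ⟨k, hk⟩ := hbad.exists_notMem
  obtain ⟨hdC, hdne, hdc⟩ := hd k
  obtain ⟨x, hx⟩ := (hd (k + 1)).2.1
  exact ⟨d k, hdC, hdc, hdne, ⟨x, (hd (k + 1)).2.2 hx, disjoint_right.1 (hdisj (by omega)) hx⟩,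
    not_not.1 hk⟩

theorem exists_subset_ends_gt {e : ℚ → ℕ} (he : FinToOne e) (hC : IsSubalg C)
    (hCat : IsAtomlessAlg C) {c : Set ℚ} (hc : c ∈ C) (hne : c.Nonempty) (M : ℕ) :
    ∃ d ∈ C, d ⊆ c ∧ d.Nonempty ∧ (c \ d).Nonempty ∧ ∀ p ∈ ends d, M < e p := by
  obtain ⟨d, hdC, hdc, hdne, hcd, hdisj⟩ :=
    exists_subset_disjoint_ends hC hCat hc hne (he.finite_le M)
  exact ⟨d, hdC, hdc, hdne, hcd, fun p hp => not_le.1 fun hpM =>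
    disjoint_left.1 hdisj hp ⟨(hC.1 d hdC).ends_subset_Eset hp, hpM⟩⟩

end IsSubalg

structure AlternatingPieces (e : ℚ → ℕ) (C : Set (Set ℚ)) (a b : Set ℚ) (t : ℕ)
    (d : ℕ → Set ℚ) : Prop where
  mem : ∀ i < t, d i ∈ C
  nonempty : ∀ i < t, (d i).Nonempty
  subset_left : ∀ i < t, Even i → d i ⊆ a
  subset_right : ∀ i < t, ¬Even i → d i ⊆ b
  disjoint : ∀ i < t, ∀ j < t, i ≠ j → (Even i ↔ Even j) → Disjoint (d i) (d j)
  ends_lt : ∀ i j, i < j → j < t → ∀ p ∈ ends (d i), ∀ q ∈ ends (d j), e p < e q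

/-- The first piece is taken inside `a`; the others come from the same construction for `b` and
what remains of `a`, with the roles of the two sides swapped. -/
theorem exists_alternatingPieces {e : ℚ → ℕ} (he : FinToOne e) {C : Set (Set ℚ)}
    (hC : IsSubalg C) (hCat : IsAtomlessAlg C) (t : ℕ) :
    ∀ (M : ℕ) {a b : Set ℚ}, a ∈ C → b ∈ C → a.Nonempty → b.Nonempty →
      ∃ d, AlternatingPieces e C a b t d ∧ ∀ i < t, ∀ p ∈ ends (d i), M < e p := by
  induction t with
  | zero =>
    exact fun _ _ _ _ _ _ _ => ⟨fun _ => ∅, by constructor <;> simp, by simp⟩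
  | succ t ih =>
    intro M a b ha hb hane hbne
    obtain ⟨d₀, hd₀C, hd₀a, hd₀ne, hrest, hd₀M⟩ := hC.exists_subset_ends_gt he hCat ha hane M
    obtain ⟨M₁, hM₁⟩ := ((hC.1 _ hd₀C).ends_finite.image e).bddAbove
    obtain ⟨d, hd, hdM⟩ := ih (max M M₁) hb (hC.diff_mem ha hd₀C) hbne hrest
    refine ⟨fun | 0 => d₀ | i + 1 => d i, ⟨?_, ?_, ?_, ?_, ?_, ?_⟩, ?_⟩
    · rintro (_ | i) hi
      exacts [hd₀C, hd.mem i (by omega)]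
    · rintro (_ | i) hi
      exacts [hd₀ne, hd.nonempty i (by omega)]
    · rintro (_ | i) hi hev
      · exact hd₀a
      · exact (hd.subset_right i (by omega) (Nat.even_add_one.1 hev)).trans sdiff_subset
    · rintro (_ | i) hi hev
      · exact absurd Even.zero hev
      · exact hd.subset_left i (by omega) (not_not.1 (Nat.even_add_one.not.1 hev))
    · rintro (_ | i) hi (_ | j) hj hij hpar
      · exact absurd rfl hij
      · exact disjoint_sdiff_right.mono_right
          (hd.subset_right j (by omega) (Nat.even_add_one.1 (hpar.1 Even.zero)))
      · exact (disjoint_sdiff_right.mono_right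
          (hd.subset_right i (by omega) (Nat.even_add_one.1 (hpar.2 Even.zero)))).symm
      · exact hd.disjoint i (by omega) j (by omega) (by omega)
          (not_iff_not.1 (by simpa only [Nat.even_add_one] using hpar))
    · rintro (_ | i) (_ | j) hij hj p hp q hq
      · omega
      · exact (hM₁ (mem_image_of_mem e hp)).trans_lt
          ((le_max_right M M₁).trans_lt (hdM j (by omega) q hq))
      · omega
      · exact hd.ends_lt i j (by omega) (by omega) p hp q hq
    · rintro (_ | i) hi p hp
      exacts [hd₀M p hp, (le_max_left M M₁).trans_lt (hdM i (by omega) p hp)]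

structure AlternatingBlocks (A B : Set ℕ) (t : ℕ) (E : ℕ → Set ℕ) : Prop where
  nonempty : ∀ i < t, (E i).Nonempty
  lt : ∀ i j, i < j → j < t → ∀ x ∈ E i, ∀ y ∈ E j, x < y
  mem_left : ∀ x, x ∈ A ↔ ∃ i < t, Even i ∧ x ∈ E i
  mem_right : ∀ x, x ∈ B ↔ ∃ i < t, ¬Even i ∧ x ∈ E i

namespace AlternatingPieces

variable {e : ℚ → ℕ} {C : Set (Set ℚ)} {a b : Set ℚ} {t : ℕ} {d : ℕ → Set ℚ}

theorem disjoint_ends (hd : AlternatingPieces e C a b t d) {i j : ℕ} (hi : i < t) (hj : j < t)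
    (hij : i ≠ j) : Disjoint (ends (d i)) (ends (d j)) := by
  rcases hij.lt_or_gt with h | h
  · exact disjoint_left.2 fun p hpi hpj => lt_irrefl _ (hd.ends_lt i j h hj p hpi p hpj)
  · exact disjoint_left.2 fun p hpi hpj => lt_irrefl _ (hd.ends_lt j i h hi p hpj p hpi)

theorem intS_biUnion (hC : IsSubalg C) (hd : AlternatingPieces e C a b t d) {S : Finset ℕ}
    (hS : ∀ i ∈ S, i < t) (hpar : ∀ i ∈ S, ∀ j ∈ S, Even i ↔ Even j) :
    intS e (⋃ i ∈ S, d i) = ⋃ i ∈ S, e '' ends (d i) := by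
  have hgood : ∀ i ∈ S, IsGood (d i) := fun i hi => hC.1 _ (hd.mem i (hS i hi))
  rw [(hC.1 _ (hC.biUnion_mem S fun i hi => hd.mem i (hS i hi))).intS_eq,
    ends_biUnion (fun i hi => (hgood i hi).hasLeftLimits)
      (fun i hi j hj hij => hd.disjoint i (hS i hi) j (hS j hj) hij (hpar i hi j hj))
      (fun i hi j hj hij => hd.disjoint_ends (hS i hi) (hS j hj) hij),
    image_iUnion₂]

theorem alternatingBlocks (hC : IsSubalg C) (hd : AlternatingPieces e C a b t d) :
    AlternatingBlocks (intS e (⋃ i ∈ (Finset.range t).filter Even, d i))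
      (intS e (⋃ i ∈ (Finset.range t).filter (¬Even ·), d i)) t (fun i => e '' ends (d i)) where
  nonempty i hi := ((hC.1 _ (hd.mem i hi)).ends_nonempty (hd.nonempty i hi)).image e
  lt := by
    rintro i j hij hj _ ⟨p, hp, rfl⟩ _ ⟨q, hq, rfl⟩
    exact hd.ends_lt i j hij hj p hp q hq
  mem_left _ := by
    rw [hd.intS_biUnion hC (fun i hi => by simp_all)
      (fun i hi j hj => iff_of_true (by simp_all) (by simp_all))]
    simp [and_assoc]
  mem_right _ := by
    rw [hd.intS_biUnion hC (fun i hi => by simp_all)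
      (fun i hi j hj => iff_of_false (by simp_all) (by simp_all))]
    simp [and_assoc]

end AlternatingPieces

section OscAt

variable {e : ℚ → ℕ} {a b : Set ℚ} {x : ℕ}

theorem oscAt_of_mem_symmDiff (hx : x ∈ symmDiff (intS e a) (intS e b))
    (hprev : ∀ j < x, j ∈ symmDiff (intS e a) (intS e b) →
      (∀ j', j < j' → j' < x → j' ∉ symmDiff (intS e a) (intS e b)) →
      (j ∈ intS e a ↔ x ∈ intS e b)) :
    OscAt e a b x := by
  rcases hx with ⟨hxa, hxb⟩ | ⟨hxb, hxa⟩
  · refine ⟨false, ⟨hxa, hxb⟩, fun j hj hjs hmax => ?_⟩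
    have hja : j ∉ intS e a := fun h => hxb ((hprev j hj hjs hmax).1 h)
    exact ⟨(hjs.resolve_left fun h => hja h.1).1, hja⟩
  · refine ⟨true, ⟨hxb, hxa⟩, fun j hj hjs hmax => ?_⟩
    have hja : j ∈ intS e a := (hprev j hj hjs hmax).2 hxb
    exact ⟨hja, fun hjb => (hjs.resolve_right fun h => h.2 hja).2 hjb⟩

theorem OscAt.mem_symmDiff (h : OscAt e a b x) : x ∈ symmDiff (intS e a) (intS e b) := by
  obtain ⟨_ | _, hx, -⟩ := h
  exacts [Or.inl hx, Or.inr hx]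

theorem OscAt.mem_iff_notMem (h : OscAt e a b x) {j : ℕ} (hj : j < x)
    (hjs : j ∈ symmDiff (intS e a) (intS e b))
    (hmax : ∀ j', j < j' → j' < x → j' ∉ symmDiff (intS e a) (intS e b)) :
    j ∈ intS e a ↔ x ∉ intS e a := by
  obtain ⟨_ | _, hx, hprev⟩ := h
  · exact iff_of_false (hprev j hj hjs hmax).2 (not_not.2 hx.1)
  · exact iff_of_true (hprev j hj hjs hmax).1 hx.2

end OscAt

namespace AlternatingBlocks

variable {A B : Set ℕ} {t : ℕ} {E : ℕ → Set ℕ}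

theorem index_le (h : AlternatingBlocks A B t E) {i j x y : ℕ} (hi : i < t) (hx : x ∈ E i)
    (hy : y ∈ E j) (hxy : x ≤ y) : i ≤ j :=
  not_lt.1 fun hji => (h.lt j i hji hi y hy x hx).not_ge hxy

theorem mem_left_iff (h : AlternatingBlocks A B t E) {i x : ℕ} (hi : i < t) (hx : x ∈ E i) :
    x ∈ A ↔ Even i := by
  refine (h.mem_left x).trans ⟨fun ⟨j, hj, hev, hxj⟩ => ?_, fun hev => ⟨i, hi, hev, hx⟩⟩
  rwa [le_antisymm (h.index_le hj hxj hx le_rfl) (h.index_le hi hx hxj le_rfl)] at hev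

theorem mem_right_iff (h : AlternatingBlocks A B t E) {i x : ℕ} (hi : i < t) (hx : x ∈ E i) :
    x ∈ B ↔ ¬Even i := by
  refine (h.mem_right x).trans ⟨fun ⟨j, hj, hev, hxj⟩ => ?_, fun hev => ⟨i, hi, hev, hx⟩⟩
  rwa [le_antisymm (h.index_le hj hxj hx le_rfl) (h.index_le hi hx hxj le_rfl)] at hev

theorem mem_symmDiff_iff (h : AlternatingBlocks A B t E) {x : ℕ} :
    x ∈ symmDiff A B ↔ ∃ i < t, x ∈ E i := by
  constructor
  · rintro (⟨hx, -⟩ | ⟨hx, -⟩)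
    · obtain ⟨i, hi, -, hxi⟩ := (h.mem_left x).1 hx
      exact ⟨i, hi, hxi⟩
    · obtain ⟨i, hi, -, hxi⟩ := (h.mem_right x).1 hx
      exact ⟨i, hi, hxi⟩
  · rintro ⟨i, hi, hxi⟩
    rw [mem_symmDiff, h.mem_left_iff hi hxi, h.mem_right_iff hi hxi]
    tauto

theorem sInf_mem (h : AlternatingBlocks A B t E) {i : ℕ} (hi : i < t) : sInf (E i) ∈ E i :=
  Nat.sInf_mem (h.nonempty i hi)

variable {e : ℚ → ℕ} {a b : Set ℚ}

/-- The element of `symmDiff` just below the least element of block `i` lies in block `i - 1`. -/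
theorem oscAt_sInf (h : AlternatingBlocks (intS e a) (intS e b) t E) {i : ℕ} (hi : i < t) :
    OscAt e a b (sInf (E i)) := by
  have hm := h.sInf_mem hi
  refine oscAt_of_mem_symmDiff (h.mem_symmDiff_iff.2 ⟨i, hi, hm⟩) fun j hj hjs hmax => ?_
  obtain ⟨k, hk, hjk⟩ := h.mem_symmDiff_iff.1 hjs
  have hki : k < i := lt_of_le_of_ne (h.index_le hk hjk hm hj.le)
    fun hki => (Nat.sInf_le (hki ▸ hjk)).not_gt hj
  obtain ⟨i', rfl⟩ : ∃ i', i = i' + 1 := ⟨i - 1, by omega⟩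
  obtain rfl : k = i' := by
    by_contra hne
    obtain ⟨w, hw⟩ := h.nonempty i' (by omega)
    exact hmax w (h.lt k i' (by omega) (by omega) j hjk w hw)
      (h.lt i' (i' + 1) (by omega) hi w hw _ hm) (h.mem_symmDiff_iff.2 ⟨i', by omega, hw⟩)
  rw [h.mem_left_iff (by omega) hjk, h.mem_right_iff hi hm, Nat.even_add_one, not_not]

/-- Below a non-least element `x` of block `i`, the greatest element of `symmDiff` lies in the
same block, hence on the same side as `x`. -/
theorem eq_sInf_of_oscAt (h : AlternatingBlocks (intS e a) (intS e b) t E) {x : ℕ}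
    (hx : OscAt e a b x) : ∃ i < t, sInf (E i) = x := by
  obtain ⟨i, hi, hxi⟩ := h.mem_symmDiff_iff.1 hx.mem_symmDiff
  refine ⟨i, hi, (Nat.sInf_le hxi).eq_of_not_lt fun hlt => ?_⟩
  set T := {y | sInf (E i) ≤ y ∧ y < x ∧ y ∈ symmDiff (intS e a) (intS e b)}
  obtain ⟨j, ⟨hmj, hjx, hjs⟩, hjmax⟩ := exists_max_image T id
    ((finite_Iio x).subset fun y hy => hy.2.1)
    ⟨_, le_rfl, hlt, h.mem_symmDiff_iff.2 ⟨i, hi, h.sInf_mem hi⟩⟩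
  obtain ⟨k, hk, hjk⟩ := h.mem_symmDiff_iff.1 hjs
  have hki : k = i := le_antisymm (h.index_le hk hjk hxi hjx.le)
    (h.index_le hi (h.sInf_mem hi) hjk hmj)
  subst hki
  have hside := hx.mem_iff_notMem hjx hjs fun j' hjj' hj'x hj's =>
    (hjmax j' ⟨hmj.trans hjj'.le, hj'x, hj's⟩).not_gt hjj'
  rw [h.mem_left_iff hk hjk, h.mem_left_iff hk hxi] at hside
  exact iff_not_self hside

theorem ncard_oscAt (h : AlternatingBlocks (intS e a) (intS e b) t E) :
    {x | OscAt e a b x}.ncard = t := by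
  have hset : {x | OscAt e a b x} = (fun i => sInf (E i)) '' Iio t := by
    ext x
    exact ⟨fun hx => h.eq_sInf_of_oscAt hx, by rintro ⟨i, hi, rfl⟩; exact h.oscAt_sInf hi⟩
  rw [hset, InjOn.ncard_image, ← Finset.coe_range, ncard_coe_finset, Finset.card_range]
  intro i hi j hj (hij : sInf (E i) = sInf (E j))
  exact le_antisymm (h.index_le hi (h.sInf_mem hi) (hij ▸ h.sInf_mem hj) le_rfl)
    (h.index_le hj (h.sInf_mem hj) (hij ▸ h.sInf_mem hi) le_rfl)

end AlternatingBlocks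

theorem exists_osc_eq {e : ℚ → ℕ} (he : FinToOne e) {C : Set (Set ℚ)} (hC : IsSubalg C)
    (hCat : IsAtomlessAlg C) {a b : Set ℚ} (ha : a ∈ C) (hb : b ∈ C) (hane : a.Nonempty)
    (hbne : b.Nonempty) (t : ℕ) :
    ∃ a' ∈ C, ∃ b' ∈ C, a' ⊆ a ∧ b' ⊆ b ∧ osc e a' b' = t := by
  obtain ⟨d, hd, -⟩ := exists_alternatingPieces he hC hCat t 0 ha hb hane hbne
  refine ⟨_, hC.biUnion_mem _ fun i hi => hd.mem i (by simp_all), _,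
    hC.biUnion_mem _ fun i hi => hd.mem i (by simp_all), iUnion₂_subset fun i hi => ?_,
    iUnion₂_subset fun i hi => ?_, (hd.alternatingBlocks hC).ncard_oscAt⟩
  · simp only [Finset.mem_filter, Finset.mem_range] at hi
    exact hd.subset_left i hi.1 hi.2
  · simp only [Finset.mem_filter, Finset.mem_range] at hi
    exact hd.subset_right i hi.1 hi.2

theorem osc_increment_general (e : ℚ → ℕ) (he : FinToOne e)
    (C : Set (Set ℚ)) (hC : IsSubalg C) (hCat : IsAtomlessAlg C)
    (a b : Set ℚ) (ha : a ∈ C) (hb : b ∈ C)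
    (hane : a ≠ ∅) (hbne : b ≠ ∅) :
    ∃ a' ∈ C, ∃ b' ∈ C, a' ⊆ a ∧ b' ⊆ b ∧
      osc e a' b' = osc e a b + 1 :=
  exists_osc_eq he hC hCat ha hb (nonempty_iff_ne_empty.2 hane) (nonempty_iff_ne_empty.2 hbne) _

/-- oscillation increment lemma. -/
theorem osc_increment (e : ℚ → ℕ) (he : FinToOne e)
    (C : Set (Set ℚ)) (hC : IsSubalg C) (hCat : IsAtomlessAlg C)
    (hCc : C.Countable) (a b : Set ℚ) (ha : a ∈ C) (hb : b ∈ C)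
    (hane : a ≠ ∅) (hbne : b ≠ ∅) :
    ∃ a' ∈ C, ∃ b' ∈ C, a' ⊆ a ∧ b' ⊆ b ∧
      osc e a' b' = osc e a b + 1 :=
  osc_increment_general e he C hC hCat a b ha hb hane hbne
end

section
/- (Main theorem) There exists a coloring χ : Emb(B₃, B) → ℕ of the embeddings of the 3-atom Boolean algebra B₃ into the countable atomless Boolean algebra B with infinitely many colors, such that for every countable atomless subalgebra C of B and every n ∈ ℕ, there is an embedding of B₃ into C receiving color n. Consequently, the big Ramsey degree of B₃ in B is infinite. -/
open Set

/-- An embedding of the 3-atom Boolean algebra (realized as `𝒫(Fin 3)`) into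
the interval algebra of good subsets of `X`. -/
def IsEmb3 (f : Set (Fin 3) → Set ℚ) : Prop :=
  Function.Injective f ∧ (∀ s, IsGood (f s)) ∧
  f ∅ = ∅ ∧ f Set.univ = Xset ∧
  (∀ s t, f (s ∪ t) = f s ∪ f t) ∧
  (∀ s t, f (s ∩ t) = f s ∩ f t) ∧
  (∀ s, f sᶜ = Xset \ f s)

/-!
Inside `C`, atomlessness gives a decreasing chain `X = Q₀ ⊇ Q₁ ⊇ ⋯ ⊇ Q_m` of nonempty members
such that every jump point of `Q_{j+1}` has a larger code than every jump point of `Q_j`: a nonempty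
member splits into two disjoint nonempty members, at most one of which lies in a given proper
filter, so it can be shrunk to lie in none of the finitely many one-sided neighbourhood filters
of the points of small code.

Points and one-sided neighbourhoods are handled alike through the filters `pure x`, `𝓝[<] w` and
`𝓝[>] w`; the level of such a filter is the number of `Q_j` it contains. Colour the points of
level `k` by `0` for even `k` and alternately by `1` and `2` for odd `k`. A jump point of `Q_j` has
levels `j` and `j + 1` on its two sides, so it is a jump of exactly one of the atoms `1`, `2`, and
which one changes at every second `j`. Read in the order of codes, the jumps of these two atoms
therefore alternate about `m / 2` times, and `m = 2n + 2` gives colour `n`.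
-/
open Filter Topology Function Encodable

namespace BigRamseyThreeAtoms

section Jumps

variable {α : Type*} [LinearOrder α] [TopologicalSpace α] [OrderTopology α]

-- For a good subset of `ℚ` these are exactly its endpoints.
def jumps (s : Set α) : Set α := {w | Xor (s ∈ 𝓝[<] w) (s ∈ 𝓝[>] w)}

theorem _root_.Set.OrdConnected.mem_nhdsLT_or_compl_mem {s : Set α} (hs : s.OrdConnected)
    (w : α) : s ∈ 𝓝[<] w ∨ sᶜ ∈ 𝓝[<] w := by
  refine or_iff_not_imp_right.2 fun h => ?_
  have hfreq : ∃ᶠ x in 𝓝[<] w, x ∈ s := h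
  obtain ⟨x₀, hx₀s, hx₀w⟩ := (hfreq.and_eventually self_mem_nhdsWithin).exists
  refine mem_of_superset (Ioo_mem_nhdsLT hx₀w) fun y hy => ?_
  obtain ⟨x₁, hx₁s, hyx₁⟩ :=
    (hfreq.and_eventually (nhdsWithin_le_nhds (Ioi_mem_nhds hy.2))).exists
  exact hs.out hx₀s hx₁s ⟨hy.1.le, hyx₁.le⟩

theorem _root_.Set.OrdConnected.mem_nhdsGT_or_compl_mem {s : Set α} (hs : s.OrdConnected)
    (w : α) : s ∈ 𝓝[>] w ∨ sᶜ ∈ 𝓝[>] w :=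
  hs.dual.mem_nhdsLT_or_compl_mem (OrderDual.toDual w)

theorem notMem_jumps_of_mem_nhds_or_compl_mem [DenselyOrdered α] [NoMinOrder α]
    [NoMaxOrder α] {s : Set α} {w : α} (h : s ∈ 𝓝 w ∨ sᶜ ∈ 𝓝 w) : w ∉ jumps s := by
  have hL : 𝓝[<] w ≤ 𝓝 w := nhdsWithin_le_nhds
  have hR : 𝓝[>] w ≤ 𝓝 w := nhdsWithin_le_nhds
  rcases h with h | h <;> rintro (⟨h₁, h₂⟩ | ⟨h₁, h₂⟩)
  · exact h₂ (hR h)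
  · exact h₂ (hL h)
  · exact compl_notMem h₁ (hL h)
  · exact compl_notMem h₁ (hR h)

end Jumps

theorem _root_.Filter.biUnion_mem_or_compl_mem {α ι : Type*} {l : Filter α} (I : Finset ι)
    {s : ι → Set α} (h : ∀ i ∈ I, s i ∈ l ∨ (s i)ᶜ ∈ l) :
    (⋃ i ∈ I, s i) ∈ l ∨ (⋃ i ∈ I, s i)ᶜ ∈ l := by
  by_cases hI : ∃ i ∈ I, s i ∈ l
  · obtain ⟨i, hi, hsi⟩ := hI
    exact .inl (mem_of_superset hsi (subset_biUnion_of_mem (u := s) (Finset.mem_coe.2 hi)))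
  · push Not at hI
    rw [compl_iUnion₂]
    exact .inr ((biInter_finset_mem I).2 fun i hi => (h i hi).resolve_left (hI i hi))

section GoodSets

theorem Eset_subset_Icc : Eset ⊆ Icc 0 1 := by
  rintro q (⟨h₀, h₁⟩ | rfl)
  exacts [⟨h₀, h₁.le⟩, ⟨zero_le_one, le_rfl⟩]

variable {n : ℕ} {f : ℕ → ℚ} {a : Set ℚ}

theorem _root_.IsGoodSeq.eq_biUnion (h : IsGoodSeq n f a) (ha : a ⊆ Xset) :
    a = ⋃ i ∈ Finset.range n, Ico (f (2 * i)) (f (2 * i + 1)) := by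
  ext x
  simp only [mem_iUnion, Finset.mem_range, exists_prop, mem_Ico]
  refine ⟨fun hx => (h.2.2 x (ha hx)).1 hx, fun ⟨i, hi, hx⟩ => (h.2.2 x ?_).2 ⟨i, hi, hx⟩⟩
  exact ⟨(Eset_subset_Icc (h.1 _ (by omega))).1.trans hx.1,
    hx.2.trans_le (Eset_subset_Icc (h.1 _ (by omega))).2⟩

theorem _root_.IsGoodSeq.mem_or_compl_mem (h : IsGoodSeq n f a) (ha : a ⊆ Xset) {l : Filter ℚ}
    (hl : ∀ i < n, Ico (f (2 * i)) (f (2 * i + 1)) ∈ l ∨ (Ico (f (2 * i)) (f (2 * i + 1)))ᶜ ∈ l) :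
    a ∈ l ∨ aᶜ ∈ l := by
  rw [h.eq_biUnion ha]
  exact biUnion_mem_or_compl_mem _ fun i hi => hl i (Finset.mem_range.1 hi)

theorem _root_.IsGood.mem_nhdsLT_or_compl_mem (h : IsGood a) (w : ℚ) : a ∈ 𝓝[<] w ∨ aᶜ ∈ 𝓝[<] w :=
  let ⟨ha, _, _, hf⟩ := h
  hf.mem_or_compl_mem ha fun _ _ => ordConnected_Ico.mem_nhdsLT_or_compl_mem w

theorem _root_.IsGood.mem_nhdsGT_or_compl_mem (h : IsGood a) (w : ℚ) : a ∈ 𝓝[>] w ∨ aᶜ ∈ 𝓝[>] w :=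
  let ⟨ha, _, _, hf⟩ := h
  hf.mem_or_compl_mem ha fun _ _ => ordConnected_Ico.mem_nhdsGT_or_compl_mem w

theorem _root_.IsGood.jumps_finite (h : IsGood a) : (jumps a).Finite := by
  obtain ⟨ha, n, f, hf⟩ := h
  refine ((finite_Iio (2 * n)).image f).subset fun w hw => by_contra fun hwf => ?_
  refine notMem_jumps_of_mem_nhds_or_compl_mem (hf.mem_or_compl_mem ha fun i hi => ?_) hw
  have hw' : w ∉ frontier (Ico (f (2 * i)) (f (2 * i + 1))) := by
    rw [frontier_Ico (hf.2.1 _ _ (by omega) (by omega))]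
    rintro (rfl | rfl)
    exacts [hwf ⟨2 * i, by simp; omega, rfl⟩, hwf ⟨2 * i + 1, by simp; omega, rfl⟩]
  rw [← mem_compl_iff, compl_frontier_eq_union_interior] at hw'
  simpa only [mem_union, mem_interior_iff_mem_nhds] using hw'

theorem _root_.IsGood.jumps_nonempty (h : IsGood a) (hne : a.Nonempty) : (jumps a).Nonempty := by
  obtain ⟨ha, n, f, hf⟩ := h
  have ha_eq := hf.eq_biUnion ha
  obtain ⟨x, hx⟩ := hne
  rw [ha_eq] at hx
  obtain ⟨i, hi, -⟩ := mem_iUnion₂.1 hx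
  have hn : 0 < n := by simp only [Finset.mem_range] at hi; omega
  have hfirst : Ico (f 0) (f 1) ⊆ a := by
    rw [ha_eq]
    exact subset_biUnion_of_mem (u := fun i => Ico (f (2 * i)) (f (2 * i + 1)))
      (Finset.mem_coe.2 (Finset.mem_range.2 hn))
  have hbelow : a ⊆ Ici (f 0) := by
    rw [ha_eq]
    refine iUnion₂_subset fun j hj y hy => le_trans ?_ hy.1
    rcases Nat.eq_zero_or_pos j with rfl | hj0
    · rfl
    · exact (hf.2.1 0 _ (by omega) (by simp only [Finset.mem_range] at hj; omega)).le
  refine ⟨f 0, .inr ⟨mem_of_superset (Ioo_mem_nhdsGT (hf.2.1 0 1 one_pos (by omega)))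
    (Ioo_subset_Ico_self.trans hfirst), fun hL => ?_⟩⟩
  obtain ⟨y, hy, hy0⟩ := Filter.nonempty_of_mem (inter_mem hL self_mem_nhdsWithin)
  exact not_le.2 hy0 (mem_Ici.1 (hbelow hy))

end GoodSets

section Level

variable {α : Type*} {Q : ℕ → Set α} {l : Filter α} {j k : ℕ}

noncomputable def level (Q : ℕ → Set α) (l : Filter α) : ℕ := sInf {j | Q j ∉ l}

theorem level_eq (hk : Q k ∉ l) (hlt : ∀ j < k, Q j ∈ l) : level Q l = k :=
  le_antisymm (Nat.sInf_le hk)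
    (le_of_not_gt fun h => Nat.sInf_mem (s := {j | Q j ∉ l}) ⟨k, hk⟩ (hlt _ h))

theorem mem_iff_lt_level (hQ : Antitone Q) (h : ∃ j, Q j ∉ l) : Q j ∈ l ↔ j < level Q l :=
  ⟨fun hj => lt_of_not_ge fun hle => Nat.sInf_mem h (mem_of_superset hj (hQ hle)),
    fun hj => not_not.1 (Nat.notMem_of_lt_sInf hj)⟩

theorem eventually_level_pure_eq (hdec : ∀ j, Q j ∈ l ∨ (Q j)ᶜ ∈ l) (h : ∃ j, Q j ∉ l) :
    ∀ᶠ x in l, level Q (pure x) = level Q l := by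
  have hlt : ∀ j ∈ Iio (level Q l), Q j ∈ l := fun j hj => not_not.1 (Nat.notMem_of_lt_sInf hj)
  filter_upwards [(hdec _).resolve_left (Nat.sInf_mem h),
    (eventually_all_finite (finite_Iio _)).2 hlt] with x hxk hxlt
  exact level_eq (mt mem_pure.1 hxk) fun j hj => mem_pure.2 (hxlt j hj)

theorem setOf_level_pure_mem_iff [l.NeBot] (p : ℕ → Prop) (hdec : ∀ j, Q j ∈ l ∨ (Q j)ᶜ ∈ l)
    (h : ∃ j, Q j ∉ l) : {x | p (level Q (pure x))} ∈ l ↔ p (level Q l) := by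
  have hev := eventually_level_pure_eq hdec h
  refine ⟨fun hp => ?_, fun hp => hev.mono fun x hx => by simpa [hx] using hp⟩
  obtain ⟨x, hpx, hx⟩ := (Filter.Eventually.and hp hev).exists
  exact hx ▸ hpx

theorem level_pure_eq_succ_iff (hQ : Antitone Q) {x : α} :
    level Q (pure x) = k + 1 ↔ x ∈ Q k \ Q (k + 1) := by
  refine ⟨fun hx => ?_, fun hx => level_eq (by simpa using hx.2)
    fun j hj => by simpa using hQ (Nat.le_of_lt_succ hj) hx.1⟩
  have h : ∃ j, Q j ∉ pure x := Nat.nonempty_of_sInf_eq_succ hx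
  have hmem := fun j => (mem_iff_lt_level (j := j) hQ h).trans (by rw [hx])
  simp only [mem_pure] at hmem
  exact ⟨(hmem k).2 (Nat.lt_succ_self k), fun h' => lt_irrefl _ ((hmem _).1 h')⟩

end Level

section Alternations

variable {α β : Type*} [LinearOrder β]

def alternations (e : α → β) (D S : Set α) : Set α :=
  {w ∈ D | ∃ w' ∈ D, e w' < e w ∧ ¬(w' ∈ S ↔ w ∈ S) ∧ ∀ v ∈ D, ¬(e w' < e v ∧ e v < e w)}

variable {e : α → β} {B : ℕ → Set α} {m : ℕ} {S : Set α} {lab : ℕ → Prop}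

theorem mem_alternations_iff (hne : ∀ j ≤ m, (B j).Nonempty)
    (hfin : ∀ j ≤ m, (B j).Finite)
    (hlt : ∀ i j, i < j → j ≤ m → ∀ w ∈ B i, ∀ w' ∈ B j, e w < e w')
    (hS : ∀ j ≤ m, ∀ w ∈ B j, (w ∈ S ↔ lab j)) {w : α} :
    w ∈ alternations e (⋃ j ≤ m, B j) S ↔
      ∃ j, 0 < j ∧ j ≤ m ∧ ¬(lab (j - 1) ↔ lab j) ∧ w ∈ B j ∧ ∀ v ∈ B j, e w ≤ e v := by
  simp only [alternations, mem_ofPred_eq, mem_iUnion, exists_prop]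
  constructor
  · rintro ⟨⟨j, hj, hw⟩, w', ⟨i, hi, hw'⟩, hww', hside, hbetween⟩
    have hlab : ¬(lab i ↔ lab j) := by rwa [← hS i hi w' hw', ← hS j hj w hw]
    have hij : i < j := by
      rcases lt_trichotomy i j with h | rfl | h
      exacts [h, absurd Iff.rfl hlab, absurd hww' (hlt j i h hi w hw w' hw').asymm]
    have hpred : i = j - 1 := by
      by_contra hne'
      obtain ⟨v, hv⟩ := hne (j - 1) (by omega)
      exact hbetween v ⟨j - 1, by omega, hv⟩
        ⟨hlt i (j - 1) (by omega) (by omega) w' hw' v hv, hlt (j - 1) j (by omega) hj v hv w hw⟩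
    refine ⟨j, by omega, hj, hpred ▸ hlab, hw, fun v hv => le_of_not_gt fun hvw => ?_⟩
    exact hbetween v ⟨j, hj, hv⟩ ⟨hlt i j hij hj w' hw' v hv, hvw⟩
  · rintro ⟨j, hj0, hj, hlab, hw, hmin⟩
    obtain ⟨w', hw', hmax⟩ :=
      Set.exists_max_image _ e (hfin (j - 1) (by omega)) (hne (j - 1) (by omega))
    refine ⟨⟨j, hj, hw⟩, w', ⟨j - 1, by omega, hw'⟩, hlt _ _ (by omega) hj w' hw' w hw, ?_, ?_⟩
    · rwa [hS _ (by omega) w' hw', hS j hj w hw]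
    · rintro v ⟨i, hi, hv⟩ ⟨hw'v, hvw⟩
      rcases lt_trichotomy i (j - 1) with h | rfl | h
      · exact (hlt i (j - 1) h (by omega) v hv w' hw').asymm hw'v
      · exact (hmax v hv).not_gt hw'v
      · rcases (show i = j ∨ j < i by omega) with rfl | h'
        · exact (hmin v hv).not_gt hvw
        · exact (hlt j i h' hi w hw v hv).asymm hvw

theorem ncard_alternations (he : Injective e) (hne : ∀ j ≤ m, (B j).Nonempty)
    (hfin : ∀ j ≤ m, (B j).Finite)
    (hlt : ∀ i j, i < j → j ≤ m → ∀ w ∈ B i, ∀ w' ∈ B j, e w < e w')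
    (hS : ∀ j ≤ m, ∀ w ∈ B j, (w ∈ S ↔ lab j)) :
    (alternations e (⋃ j ≤ m, B j) S).ncard =
      {j | 0 < j ∧ j ≤ m ∧ ¬(lab (j - 1) ↔ lab j)}.ncard := by
  have : Nonempty α := (hne 0 m.zero_le).to_subtype.map Subtype.val
  choose! μ hμ hμmin using fun j hj => Set.exists_min_image _ e (hfin j hj) (hne j hj)
  have hμeq : ∀ j ≤ m, ∀ w ∈ B j, (∀ v ∈ B j, e w ≤ e v) → w = μ j := fun j hj w hw hw' =>
    he (le_antisymm (hw' _ (hμ j hj)) (hμmin j hj w hw))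
  have himage : alternations e (⋃ j ≤ m, B j) S =
      μ '' {j | 0 < j ∧ j ≤ m ∧ ¬(lab (j - 1) ↔ lab j)} := by
    ext w
    rw [mem_alternations_iff hne hfin hlt hS]
    constructor
    · rintro ⟨j, hj0, hj, hlab, hw, hmin⟩
      exact ⟨j, ⟨hj0, hj, hlab⟩, (hμeq j hj w hw hmin).symm⟩
    · rintro ⟨j, ⟨hj0, hj, hlab⟩, rfl⟩
      exact ⟨j, hj0, hj, hlab, hμ j hj, hμmin j hj⟩
  rw [himage]
  refine InjOn.ncard_image fun i ⟨_, hi, _⟩ j ⟨_, hj, _⟩ hij => ?_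
  by_contra hne'
  rcases Nat.lt_or_gt_of_ne hne' with h | h
  · exact (hlt i j h hj _ (hμ i hi) _ (hμ j hj)).ne (congrArg e hij)
  · exact (hlt j i h hi _ (hμ j hj) _ (hμ i hi)).ne (congrArg e hij.symm)

end Alternations

section Subalgebra

variable {C : Set (Set ℚ)}

theorem _root_.IsSubalg.diff_mem_s15 (hC : IsSubalg C) {a b : Set ℚ} (ha : a ∈ C) (hb : b ∈ C) :
    a \ b ∈ C := by
  have : a \ b = a ∩ (Xset \ b) := by
    ext x
    exact ⟨fun h => ⟨h.1, (hC.1 a ha).1 h.1, h.2⟩, fun h => ⟨h.1, h.2.2⟩⟩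
  exact this ▸ hC.2.2.2.2.1 a ha _ (hC.2.2.2.2.2 b hb)

theorem _root_.IsSubalg.biUnion_mem_s15 {ι : Type*} (hC : IsSubalg C) {I : Set ι} (hI : I.Finite)
    {s : ι → Set ℚ} (hs : ∀ i ∈ I, s i ∈ C) : ⋃ i ∈ I, s i ∈ C := by
  induction I, hI using Set.Finite.induction_on with
  | empty => simpa using hC.2.1
  | @insert i I _ _ ih =>
    rw [biUnion_insert]
    exact hC.2.2.2.1 _ (hs i (mem_insert i I)) _ (ih fun j hj => hs j (mem_insert_of_mem i hj))

theorem _root_.IsAtomlessAlg.exists_subset_notMem (hC : IsSubalg C) (hA : IsAtomlessAlg C)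
    {u : Set ℚ} (hu : u ∈ C) (hne : u.Nonempty) (l : Filter ℚ) [l.NeBot] :
    ∃ v ∈ C, v.Nonempty ∧ v ⊆ u ∧ v ∉ l := by
  obtain ⟨b, hb, hbne, hbu⟩ := hA u hu hne.ne_empty
  by_cases hbl : b ∈ l
  · refine ⟨u \ b, hC.diff_mem_s15 hu hb, sdiff_nonempty.2 hbu.2, sdiff_subset, fun hl => ?_⟩
    obtain ⟨x, hx⟩ := Filter.nonempty_of_mem (inter_mem hbl hl)
    exact hx.2.2 hx.1
  · exact ⟨b, hb, nonempty_iff_ne_empty.2 hbne, hbu.1, hbl⟩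

theorem _root_.IsAtomlessAlg.exists_subset_forall_notMem (hC : IsSubalg C)
    (hA : IsAtomlessAlg C) {u : Set ℚ} (hu : u ∈ C) (hne : u.Nonempty) {L : Set (Filter ℚ)}
    (hL : L.Finite) (hbot : ∀ l ∈ L, l.NeBot) :
    ∃ v ∈ C, v.Nonempty ∧ v ⊆ u ∧ ∀ l ∈ L, v ∉ l := by
  induction L, hL using Set.Finite.induction_on with
  | empty => exact ⟨u, hu, hne, subset_rfl, fun _ => False.elim⟩
  | @insert l L _ _ ih =>
    obtain ⟨v, hv, hvne, hvu, hvL⟩ := ih fun l' hl' => hbot l' (mem_insert_of_mem l hl')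
    have : l.NeBot := hbot l (mem_insert l L)
    obtain ⟨v', hv', hv'ne, hv'v, hv'l⟩ := hA.exists_subset_notMem hC hv hvne l
    refine ⟨v', hv', hv'ne, hv'v.trans hvu, ?_⟩
    rintro l' (rfl | hl') hl'v
    exacts [hv'l hl'v, hvL l' hl' (mem_of_superset hl'v hv'v)]

theorem _root_.IsAtomlessAlg.exists_subset_encode_lt (hC : IsSubalg C) (hA : IsAtomlessAlg C)
    {u : Set ℚ} (hu : u ∈ C) (hne : u.Nonempty) (M : ℕ) :
    ∃ v ∈ C, v.Nonempty ∧ v ⊆ u ∧ ∀ w ∈ jumps v, M < encode w := by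
  have hF : (encode ⁻¹' Iic M : Set ℚ).Finite := (finite_Iic M).preimage encode_injective.injOn
  obtain ⟨v, hv, hvne, hvu, hvL⟩ := hA.exists_subset_forall_notMem hC hu hne
    ((hF.image fun w => 𝓝[<] w).union (hF.image fun w => 𝓝[>] w))
    (by rintro l ((⟨w, -, rfl⟩ | ⟨w, -, rfl⟩)) <;> infer_instance)
  refine ⟨v, hv, hvne, hvu, fun w hw => lt_of_not_ge fun hwM => ?_⟩
  rcases hw with ⟨h, -⟩ | ⟨h, -⟩
  exacts [hvL _ (.inl ⟨w, hwM, rfl⟩) h, hvL _ (.inr ⟨w, hwM, rfl⟩) h]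

end Subalgebra

structure IsSeparatedChain (Q : ℕ → Set ℚ) (m : ℕ) : Prop where
  antitone : Antitone Q
  zero : Q 0 = Xset
  succ_eq_empty : Q (m + 1) = ∅
  good : ∀ j, IsGood (Q j)
  jumps_nonempty : ∀ j ≤ m, (jumps (Q j)).Nonempty
  encode_lt : ∀ i j, i < j → j ≤ m → ∀ w ∈ jumps (Q i), ∀ w' ∈ jumps (Q j), encode w < encode w'

section Chain

variable {C : Set (Set ℚ)} (hC : IsSubalg C) (hA : IsAtomlessAlg C)

noncomputable def maxCode (v : Set ℚ) : ℕ := sSup (encode '' jumps v)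

theorem _root_.IsGood.encode_le_maxCode {v : Set ℚ} (hv : IsGood v) {w : ℚ} (hw : w ∈ jumps v) :
    encode w ≤ maxCode v :=
  le_csSup (hv.jumps_finite.image _).bddAbove (mem_image_of_mem _ hw)

noncomputable def chain : ℕ → {v : Set ℚ // v ∈ C ∧ v.Nonempty}
  | 0 => ⟨Xset, hC.2.2.1, 0, le_rfl, one_pos⟩
  | j + 1 =>
    have h := hA.exists_subset_encode_lt hC (chain j).2.1 (chain j).2.2 (maxCode (chain j))
    ⟨h.choose, h.choose_spec.1, h.choose_spec.2.1⟩

theorem chain_succ_spec (j : ℕ) : (chain hC hA (j + 1)).1 ⊆ (chain hC hA j).1 ∧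
    ∀ w ∈ jumps (chain hC hA (j + 1)).1, maxCode (chain hC hA j) < encode w :=
  (hA.exists_subset_encode_lt hC (chain hC hA j).2.1 (chain hC hA j).2.2 _).choose_spec.2.2

theorem strictMono_maxCode_chain : StrictMono fun j => maxCode (chain hC hA j) := by
  refine strictMono_nat_of_lt_succ fun j => ?_
  have hgood := hC.1 _ (chain hC hA (j + 1)).2.1
  obtain ⟨w, hw⟩ := hgood.jumps_nonempty (chain hC hA (j + 1)).2.2
  exact ((chain_succ_spec hC hA j).2 w hw).trans_le (hgood.encode_le_maxCode hw)

theorem encode_lt_of_mem_jumps_chain {i j : ℕ} (hij : i < j) {w w' : ℚ}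
    (hw : w ∈ jumps (chain hC hA i).1) (hw' : w' ∈ jumps (chain hC hA j).1) :
    encode w < encode w' := by
  obtain ⟨k, rfl⟩ : ∃ k, j = k + 1 := ⟨j - 1, by omega⟩
  calc encode w ≤ maxCode (chain hC hA i) := (hC.1 _ (chain hC hA i).2.1).encode_le_maxCode hw
    _ ≤ maxCode (chain hC hA k) := (strictMono_maxCode_chain hC hA).monotone (by omega)
    _ < encode w' := (chain_succ_spec hC hA k).2 w' hw'

end Chain

theorem exists_isSeparatedChain {C : Set (Set ℚ)} (hC : IsSubalg C) (hA : IsAtomlessAlg C)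
    (m : ℕ) : ∃ Q, IsSeparatedChain Q m ∧ ∀ j, Q j ∈ C := by
  set P := fun j => (chain hC hA j).1
  have hP : Antitone P := antitone_nat_of_succ_le fun j => (chain_succ_spec hC hA j).1
  have hQC : ∀ j, (if j ≤ m then P j else ∅) ∈ C := fun j => by
    split_ifs
    exacts [(chain hC hA j).2.1, hC.2.1]
  refine ⟨fun j => if j ≤ m then P j else ∅, ⟨fun i j hij => ?_, if_pos m.zero_le,
    if_neg (by omega), fun j => hC.1 _ (hQC j), fun j hj => ?_, fun i j hij hj w hw w' hw' => ?_⟩,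
    hQC⟩
  · split_ifs with hj hi <;> first | exact hP hij | exact empty_subset _ | omega
  · rw [if_pos hj]
    exact (hC.1 _ (chain hC hA j).2.1).jumps_nonempty (chain hC hA j).2.2
  · simp only [if_pos hj, if_pos (hij.le.trans hj)] at hw hw'
    exact encode_lt_of_mem_jumps_chain hC hA hij hw hw'

theorem isEmb3_preimage {π : ℚ → Fin 3} (hπ : ∀ t, ∃ x ∈ Xset, π x = t)
    (hgood : ∀ s : Set (Fin 3), IsGood {x ∈ Xset | π x ∈ s}) :
    IsEmb3 fun s => {x ∈ Xset | π x ∈ s} := by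
  refine ⟨fun s s' h => ?_, hgood, ?_, ?_, fun _ _ => ?_, fun _ _ => ?_, fun _ => ?_⟩
  · ext t
    obtain ⟨x, hx, rfl⟩ := hπ t
    simpa [hx] using Set.ext_iff.1 h x
  all_goals ext x; simp only [mem_ofPred_eq, mem_empty_iff_false, mem_univ, mem_union,
    mem_inter_iff, mem_compl_iff, Set.mem_sdiff]; tauto

def color (k : ℕ) : Fin 3 := if k % 4 = 1 then 1 else if k % 4 = 3 then 2 else 0

theorem xor_color_succ (k : ℕ) :
    (Xor (color k = 1) (color (k + 1) = 1) ↔ k % 4 < 2) ∧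
      (Xor (color k = 2) (color (k + 1) = 2) ↔ ¬k % 4 < 2) := by
  have h : k % 4 = 0 ∨ k % 4 = 1 ∨ k % 4 = 2 ∨ k % 4 = 3 := by omega
  have h' : (k + 1) % 4 = (k % 4 + 1) % 4 := by omega
  rcases h with h | h | h | h <;> simp [color, h, h', Xor]

noncomputable def colorEmb (Q : ℕ → Set ℚ) (s : Set (Fin 3)) : Set ℚ :=
  {x ∈ Xset | color (level Q (pure x)) ∈ s}

namespace IsSeparatedChain

variable {Q : ℕ → Set ℚ} {m : ℕ} {l : Filter ℚ} {w : ℚ} {i j : ℕ}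

theorem exists_notMem (hQ : IsSeparatedChain Q m) (l : Filter ℚ) [l.NeBot] : ∃ j, Q j ∉ l :=
  ⟨m + 1, by rw [hQ.succ_eq_empty]; exact empty_notMem l⟩

theorem mem_iff_lt_level (hQ : IsSeparatedChain Q m) [l.NeBot] : Q j ∈ l ↔ j < level Q l :=
  BigRamseyThreeAtoms.mem_iff_lt_level hQ.antitone (hQ.exists_notMem l)

theorem level_le (hQ : IsSeparatedChain Q m) [l.NeBot] : level Q l ≤ m + 1 :=
  le_of_not_gt fun h => empty_notMem l (hQ.succ_eq_empty ▸ hQ.mem_iff_lt_level.2 h)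

theorem mem_jumps_iff (hQ : IsSeparatedChain Q m) :
    w ∈ jumps (Q j) ↔ Xor (j < level Q (𝓝[<] w)) (j < level Q (𝓝[>] w)) := by
  rw [jumps, mem_ofPred_eq, hQ.mem_iff_lt_level, hQ.mem_iff_lt_level]

theorem notMem_jumps_of_lt (hQ : IsSeparatedChain Q m) (hij : i < j) (hj : j ≤ m)
    (hw : w ∈ jumps (Q i)) : w ∉ jumps (Q j) := fun hw' =>
  lt_irrefl _ (hQ.encode_lt i j hij hj w hw w hw')

theorem level_nhdsLT_le_and_level_nhdsGT_le (hQ : IsSeparatedChain Q m) :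
    level Q (𝓝[<] w) ≤ level Q (𝓝[>] w) + 1 ∧ level Q (𝓝[>] w) ≤ level Q (𝓝[<] w) + 1 := by
  have hL : level Q (𝓝[<] w) ≤ m + 1 := hQ.level_le
  have hR : level Q (𝓝[>] w) ≤ m + 1 := hQ.level_le
  by_contra h
  obtain ⟨k, hk⟩ : ∃ k, w ∈ jumps (Q k) ∧ w ∈ jumps (Q (k + 1)) ∧ k + 1 ≤ m := by
    simp only [hQ.mem_jumps_iff, Xor]
    rcases not_and_or.1 h with h | h
    exacts [⟨level Q (𝓝[>] w), by omega⟩, ⟨level Q (𝓝[<] w), by omega⟩]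
  exact hQ.notMem_jumps_of_lt k.lt_succ_self hk.2.2 hk.1 hk.2.1

theorem levels_of_mem_jumps (hQ : IsSeparatedChain Q m) (hw : w ∈ jumps (Q j)) :
    (level Q (𝓝[<] w) = j ∧ level Q (𝓝[>] w) = j + 1) ∨
      (level Q (𝓝[<] w) = j + 1 ∧ level Q (𝓝[>] w) = j) := by
  have := hQ.level_nhdsLT_le_and_level_nhdsGT_le (w := w)
  rw [hQ.mem_jumps_iff, Xor] at hw
  omega

theorem colorEmb_mem_iff (hQ : IsSeparatedChain Q m) [l.NeBot]
    (hdec : ∀ j, Q j ∈ l ∨ (Q j)ᶜ ∈ l) {s : Set (Fin 3)} :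
    colorEmb Q s ∈ l ↔ 0 < level Q l ∧ color (level Q l) ∈ s := by
  have : colorEmb Q s = {x | 0 < level Q (pure x) ∧ color (level Q (pure x)) ∈ s} := by
    ext x
    simp only [colorEmb, mem_ofPred_eq, ← hQ.zero, ← hQ.mem_iff_lt_level, mem_pure]
  rw [this]
  exact setOf_level_pure_mem_iff (fun k => 0 < k ∧ color k ∈ s) hdec (hQ.exists_notMem l)

theorem mem_jumps_colorEmb_iff (hQ : IsSeparatedChain Q m) {t : Fin 3} (ht : t ≠ 0) :
    w ∈ jumps (colorEmb Q {t}) ↔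
      Xor (color (level Q (𝓝[<] w)) = t) (color (level Q (𝓝[>] w)) = t) := by
  have key : ∀ k, (0 < k ∧ color k ∈ ({t} : Set (Fin 3))) ↔ color k = t := fun k =>
    ⟨fun h => h.2, fun h => ⟨Nat.pos_of_ne_zero fun hk => ht (by rw [← h, hk]; rfl), h⟩⟩
  rw [jumps, mem_ofPred_eq,
    hQ.colorEmb_mem_iff fun j => (hQ.good j).mem_nhdsLT_or_compl_mem w,
    hQ.colorEmb_mem_iff fun j => (hQ.good j).mem_nhdsGT_or_compl_mem w, key, key]

theorem mem_jumps_colorEmb_of_mem_jumps (hQ : IsSeparatedChain Q m) (hw : w ∈ jumps (Q j)) :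
    (w ∈ jumps (colorEmb Q {1}) ↔ j % 4 < 2) ∧ (w ∈ jumps (colorEmb Q {2}) ↔ ¬j % 4 < 2) := by
  rw [hQ.mem_jumps_colorEmb_iff (by decide), hQ.mem_jumps_colorEmb_iff (by decide)]
  rcases hQ.levels_of_mem_jumps hw with ⟨hL, hR⟩ | ⟨hL, hR⟩ <;> rw [hL, hR]
  · exact xor_color_succ j
  · simpa only [xor_comm] using xor_color_succ j

theorem symmDiff_jumps_colorEmb (hQ : IsSeparatedChain Q m) :
    symmDiff (jumps (colorEmb Q {1})) (jumps (colorEmb Q {2})) = ⋃ j ≤ m, jumps (Q j) := by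
  ext w
  simp only [mem_symmDiff, mem_iUnion, exists_prop]
  constructor
  · intro h
    have hLR : level Q (𝓝[<] w) ≠ level Q (𝓝[>] w) := fun hLR => by
      rw [hQ.mem_jumps_colorEmb_iff (by decide), hQ.mem_jumps_colorEmb_iff (by decide), hLR] at h
      simp [Xor] at h
    have := hQ.level_nhdsLT_le_and_level_nhdsGT_le (w := w)
    have : level Q (𝓝[<] w) ≤ m + 1 ∧ level Q (𝓝[>] w) ≤ m + 1 := ⟨hQ.level_le, hQ.level_le⟩
    refine ⟨min (level Q (𝓝[<] w)) (level Q (𝓝[>] w)), by omega, hQ.mem_jumps_iff.2 ?_⟩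
    simp only [Xor]
    omega
  · rintro ⟨j, -, hw⟩
    obtain ⟨h₁, h₂⟩ := hQ.mem_jumps_colorEmb_of_mem_jumps hw
    rw [h₁, h₂]
    tauto

theorem exists_level_pure_eq (hQ : IsSeparatedChain Q m) {k : ℕ} (hk : 0 < k)
    (hkm : k ≤ m + 1) : ∃ x ∈ Xset, level Q (pure x) = k := by
  have of_level_eq : ∀ l : Filter ℚ, l.NeBot → (∀ j, Q j ∈ l ∨ (Q j)ᶜ ∈ l) → level Q l = k →
      ∃ x ∈ Xset, level Q (pure x) = k := fun l _ hdec hl => by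
    obtain ⟨x, hx⟩ := Filter.nonempty_of_mem
      ((setOf_level_pure_mem_iff (· = k) hdec (hQ.exists_notMem l)).2 hl)
    refine ⟨x, ?_, hx⟩
    rw [← hQ.zero, ← mem_pure, hQ.mem_iff_lt_level, show level Q (pure x) = k from hx]
    exact hk
  obtain ⟨w, hw⟩ := hQ.jumps_nonempty (k - 1) (by omega)
  rcases hQ.levels_of_mem_jumps hw with ⟨-, h⟩ | ⟨h, -⟩
  · exact of_level_eq _ inferInstance (fun j => (hQ.good j).mem_nhdsGT_or_compl_mem w) (by omega)
  · exact of_level_eq _ inferInstance (fun j => (hQ.good j).mem_nhdsLT_or_compl_mem w) (by omega)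

theorem exists_color_eq (hQ : IsSeparatedChain Q m) (hm : 2 ≤ m) (t : Fin 3) :
    ∃ x ∈ Xset, color (level Q (pure x)) = t := by
  obtain ⟨k, hk, hkm, rfl⟩ : ∃ k, 0 < k ∧ k ≤ m + 1 ∧ color k = t := by
    fin_cases t
    exacts [⟨2, by omega, by omega, rfl⟩, ⟨1, by omega, by omega, rfl⟩,
      ⟨3, by omega, by omega, rfl⟩]
  obtain ⟨x, hx, hxk⟩ := hQ.exists_level_pure_eq hk hkm
  exact ⟨x, hx, by rw [hxk]⟩

theorem colorEmb_eq_biUnion (hQ : IsSeparatedChain Q m) (s : Set (Fin 3)) :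
    colorEmb Q s = ⋃ k ∈ {k | k ≤ m ∧ color (k + 1) ∈ s}, Q k \ Q (k + 1) := by
  ext x
  simp only [colorEmb, mem_ofPred_eq, mem_iUnion, exists_prop,
    ← level_pure_eq_succ_iff hQ.antitone]
  have hX : x ∈ Xset ↔ 0 < level Q (pure x) := by rw [← hQ.zero, ← mem_pure, hQ.mem_iff_lt_level]
  have hle : level Q (pure x) ≤ m + 1 := hQ.level_le
  constructor
  · rintro ⟨hx, hs⟩
    have h0 := hX.1 hx
    exact ⟨level Q (pure x) - 1, ⟨by omega, by rwa [Nat.sub_add_cancel h0]⟩, by omega⟩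
  · rintro ⟨k, ⟨-, hs⟩, hk⟩
    exact ⟨hX.2 (by omega), hk ▸ hs⟩

theorem colorEmb_mem {C : Set (Set ℚ)} (hQ : IsSeparatedChain Q m) (hC : IsSubalg C)
    (hQC : ∀ j, Q j ∈ C) (s : Set (Fin 3)) : colorEmb Q s ∈ C := by
  rw [hQ.colorEmb_eq_biUnion]
  exact hC.biUnion_mem_s15 ((finite_Iic m).subset fun k hk => hk.1)
    fun k _ => hC.diff_mem_s15 (hQC k) (hQC (k + 1))

end IsSeparatedChain

-- This is `osc encode (f {1}) (f {2}) - 2` when the atoms have distinct jump sets: the jumps of a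
-- good set are its endpoints, and `osc` also counts the first point of the symmetric difference.
noncomputable def chi (f : Set (Fin 3) → Set ℚ) : ℕ :=
  (alternations encode (symmDiff (jumps (f {1})) (jumps (f {2}))) (jumps (f {1}))).ncard - 1

theorem IsSeparatedChain.chi_colorEmb {Q : ℕ → Set ℚ} {n : ℕ}
    (hQ : IsSeparatedChain Q (2 * n + 2)) : chi (colorEmb Q) = n := by
  have hcount : {j | 0 < j ∧ j ≤ 2 * n + 2 ∧ ¬((j - 1) % 4 < 2 ↔ j % 4 < 2)} =
      (fun k => 2 * k + 2) '' Iio (n + 1) := by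
    ext j
    simp only [mem_ofPred_eq, mem_image, mem_Iio]
    constructor
    · intro h
      exact ⟨j / 2 - 1, by omega, by omega⟩
    · rintro ⟨k, hk, rfl⟩
      omega
  rw [chi, hQ.symmDiff_jumps_colorEmb, ncard_alternations encode_injective hQ.jumps_nonempty
    (fun j _ => (hQ.good j).jumps_finite) hQ.encode_lt
    (fun j _ w hw => (hQ.mem_jumps_colorEmb_of_mem_jumps hw).1), hcount,
    ncard_image_of_injective _ fun a b h => by simpa using h, ncard_Iio_nat, Nat.add_sub_cancel]

end BigRamseyThreeAtoms

open BigRamseyThreeAtoms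

/-- Main theorem: there is a coloring of the embeddings of the
3-atom Boolean algebra into the countable atomless Boolean algebra `B` with
infinitely many colors such that every countable atomless subalgebra of `B`
contains an embedded copy of every color. Hence the big Ramsey degree of the
3-atom Boolean algebra in `B` is infinite. -/
theorem big_ramsey_three_atoms_infinite :
    ∃ χ : (Set (Fin 3) → Set ℚ) → ℕ,
      ∀ C : Set (Set ℚ), IsSubalg C → IsAtomlessAlg C → C.Countable →
        ∀ n : ℕ, ∃ f : Set (Fin 3) → Set ℚ,
          IsEmb3 f ∧ (∀ s, f s ∈ C) ∧ χ f = n := by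
  refine ⟨chi, fun C hC hA _ n => ?_⟩
  obtain ⟨Q, hQ, hQC⟩ := exists_isSeparatedChain hC hA (2 * n + 2)
  have hmem := hQ.colorEmb_mem hC hQC
  exact ⟨colorEmb Q, isEmb3_preimage (hQ.exists_color_eq (by omega))
    fun s => hC.1 _ (hmem s), hmem, hQ.chi_colorEmb⟩
end

section
/- Any two countable atomless Boolean algebras are isomorphic. -/
open Set

/-!
Back and forth. A finite partial isomorphism is a finite set `s` of pairs `(a, b)` such that
meets of first coordinates lie below joins of first coordinates exactly when the same holds
for the second coordinates; this makes `a ↦ b` extend to an isomorphism between the finite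
subalgebras generated by the two projections of `s`. To extend `s` by a new element `a`, split
each atom (`cell`) of the subalgebra on the `β` side the way `a` splits the matching atom on the
`α` side; atomlessness supplies a proper nonzero part where `a` cuts an atom properly.
Enumerating both algebras and alternating the extensions gives the isomorphism.
-/

open Finset

theorem Finset.inf_sup_inf_of_pairwiseDisjoint {α κ : Type*} [DistribLattice α] [OrderBot α]
    {S : Finset κ} {d : κ → α} (hd : (S : Set κ).PairwiseDisjoint d) (y : κ → α) {i : κ}
    (hi : i ∈ S) : d i ⊓ S.sup (fun j => d j ⊓ y j) = d i ⊓ y i := by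
  refine le_antisymm ?_ (le_inf inf_le_left (le_sup (f := fun j => d j ⊓ y j) hi))
  rw [sup_inf_distrib_left, Finset.sup_le_iff]
  intro j hj
  rcases eq_or_ne i j with rfl | hij
  · exact le_of_eq (by rw [← inf_assoc, inf_idem])
  · exact ((hd hi hj hij).mono_right inf_le_left).eq_bot ▸ bot_le

section Cells

variable {ι α : Type*} [DecidableEq ι] [BooleanAlgebra α]

/-- The atom (possibly `⊥`) of the subalgebra generated by `f '' s` that lies below `f i`
exactly for the `i ∈ t`. -/
def cell (f : ι → α) (s t : Finset ι) : α := t.inf f \ (s \ t).sup f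

variable {f : ι → α} {s t u : Finset ι}

theorem cell_le_of_mem {i : ι} (hi : i ∈ t) : cell f s t ≤ f i :=
  sdiff_le.trans (inf_le hi)

theorem disjoint_cell_of_mem_sdiff {i : ι} (hi : i ∈ s \ t) : Disjoint (cell f s t) (f i) :=
  disjoint_sdiff_self_left.mono_right (le_sup hi)

theorem pairwiseDisjoint_cell (f : ι → α) (s : Finset ι) :
    (s.powerset : Set (Finset ι)).PairwiseDisjoint (cell f s) := by
  intro t ht t' ht' hne
  simp only [coe_powerset, Set.mem_preimage, Set.mem_powerset_iff, Finset.coe_subset] at ht ht'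
  obtain ⟨i, hit, hit'⟩ | ⟨i, hit', hit⟩ : (∃ i ∈ t, i ∉ t') ∨ (∃ i ∈ t', i ∉ t) := by
    by_contra! h
    exact hne (Subset.antisymm h.1 h.2)
  · exact (disjoint_cell_of_mem_sdiff (mem_sdiff.2 ⟨ht hit, hit'⟩)).symm.mono_left
      (cell_le_of_mem hit)
  · exact (disjoint_cell_of_mem_sdiff (mem_sdiff.2 ⟨ht' hit', hit⟩)).mono_right
      (cell_le_of_mem hit')

theorem sup_powerset_cell (f : ι → α) (s : Finset ι) : s.powerset.sup (cell f s) = ⊤ := by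
  induction s using Finset.induction_on with
  | empty => simp [cell]
  | insert i s hi ih =>
    have hout : ∀ t ∈ s.powerset, cell f (insert i s) t = cell f s t \ f i := fun t ht => by
      rw [cell, cell, Finset.insert_sdiff_of_notMem _ fun h => hi (Finset.mem_powerset.1 ht h),
        sup_insert, sup_comm, sdiff_sdiff_left]
    have hin : ∀ t ∈ s.powerset, cell f (insert i s) (insert i t) = f i ⊓ cell f s t :=
      fun t ht => by
        rw [cell, cell, Finset.insert_sdiff_insert, Finset.sdiff_insert_of_notMem hi, inf_insert,
          inf_sdiff_assoc]
    rw [Finset.powerset_insert, sup_union, sup_image, Function.comp_def, sup_congr rfl hout,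
      sup_congr rfl hin, Finset.sup_sdiff_right, ← sup_inf_distrib_left, ih]
    simp

theorem inf_le_sup_iff_forall_disjoint_cell (x : α) (ht : t ⊆ s) (hu : u ⊆ s) :
    t.inf f ⊓ x ≤ u.sup f ↔ ∀ w ⊆ s, t ⊆ w → Disjoint w u → Disjoint (cell f s w) x := by
  constructor
  · intro h w _ htw hwu
    have hcu : Disjoint (cell f s w) (u.sup f) :=
      disjoint_sdiff_self_left.mono_right (sup_mono fun i hi =>
        mem_sdiff.2 ⟨hu hi, Finset.disjoint_right.1 hwu hi⟩)
    have hct : cell f s w ≤ t.inf f := sdiff_le.trans (inf_mono htw)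
    exact disjoint_iff_inf_le.2 (hcu inf_le_left ((inf_le_inf_right x hct).trans h))
  · intro h
    rw [← sdiff_eq_bot_iff, ← inf_top_eq (_ \ _), ← sup_powerset_cell f s, sup_inf_distrib_left,
      Finset.sup_eq_bot_iff]
    intro w hw
    rw [← disjoint_iff]
    by_cases htw : t ⊆ w
    · by_cases hwu : Disjoint w u
      · exact (h w (Finset.mem_powerset.1 hw) htw hwu).symm.mono_left
          (sdiff_le.trans inf_le_right)
      · obtain ⟨i, hiw, hiu⟩ := not_disjoint_iff.1 hwu
        exact (disjoint_sdiff_self_left.mono_right (le_sup hiu)).mono_right (cell_le_of_mem hiw)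
    · obtain ⟨i, hit, hiw⟩ := Finset.not_subset.1 htw
      exact (disjoint_cell_of_mem_sdiff (mem_sdiff.2 ⟨ht hit, hiw⟩)).symm.mono_left
        (sdiff_le.trans (inf_le_left.trans (inf_le hit)))

end Cells

theorem exists_disjoint_iff_and_disjoint_compl_iff {α β : Type*} [BooleanAlgebra α]
    [BooleanAlgebra β] (hβ : ∀ a : β, ⊥ < a → ∃ b : β, ⊥ < b ∧ b < a) {c : α} {d : β}
    (hcd : c = ⊥ ↔ d = ⊥) (a : α) :
    ∃ y : β, (Disjoint c a ↔ Disjoint d y) ∧ (Disjoint c aᶜ ↔ Disjoint d yᶜ) := by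
  by_cases hca : Disjoint c a
  · refine ⟨⊥, by simp [hca], ?_⟩
    rw [compl_bot, disjoint_top, disjoint_compl_right_iff, ← hcd]
    exact ⟨hca.eq_bot_of_le, fun h => h ▸ bot_le⟩
  by_cases hca' : Disjoint c aᶜ
  · refine ⟨⊤, ?_, by simp [hca']⟩
    rw [disjoint_top, ← hcd]
    rw [disjoint_compl_right_iff] at hca'
    exact ⟨fun h => h.eq_bot_of_le hca', fun h => h ▸ disjoint_bot_left⟩
  have hc : c ≠ ⊥ := fun h => hca (h ▸ disjoint_bot_left)
  obtain ⟨y, hy, hyd⟩ := hβ d (bot_lt_iff_ne_bot.2 (mt hcd.2 hc))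
  refine ⟨y, iff_of_false hca fun h => hy.ne' (h.symm.eq_bot_of_le hyd.le),
    iff_of_false hca' fun h => hyd.not_ge (disjoint_compl_right_iff.1 h)⟩

section PartialIso

variable {α β : Type*} [BooleanAlgebra α] [BooleanAlgebra β]

def IsPartialIso (s : Finset (α × β)) : Prop :=
  ∀ t ⊆ s, ∀ u ⊆ s, t.inf Prod.fst ≤ u.sup Prod.fst ↔ t.inf Prod.snd ≤ u.sup Prod.snd

theorem isPartialIso_empty [Nontrivial α] [Nontrivial β] :
    IsPartialIso (∅ : Finset (α × β)) := by
  intro t ht u hu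
  rw [subset_empty.1 ht, subset_empty.1 hu]
  simp

namespace IsPartialIso

variable {s : Finset (α × β)}

theorem le_iff (hs : IsPartialIso s) {a a' : α} {b b' : β} (h : (a, b) ∈ s)
    (h' : (a', b') ∈ s) : a ≤ a' ↔ b ≤ b' := by
  simpa using hs {(a, b)} (singleton_subset_iff.2 h) {(a', b')} (singleton_subset_iff.2 h')

theorem map_prodComm (hs : IsPartialIso s) :
    IsPartialIso (s.map (Equiv.prodComm α β).toEmbedding) := by
  intro t ht u hu
  obtain ⟨t, hts, rfl⟩ := subset_map_iff.1 ht
  obtain ⟨u, hus, rfl⟩ := subset_map_iff.1 hu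
  rw [inf_map, sup_map, inf_map, sup_map]
  exact (hs t hts u hus).symm

variable [DecidableEq α] [DecidableEq β]

theorem insert_of_forall_iff {a : α} {b : β} (hs : IsPartialIso s)
    (h : ∀ t ⊆ s, ∀ u ⊆ s, (t.inf Prod.fst ⊓ a ≤ u.sup Prod.fst ↔
        t.inf Prod.snd ⊓ b ≤ u.sup Prod.snd) ∧
      (t.inf Prod.fst \ a ≤ u.sup Prod.fst ↔ t.inf Prod.snd \ b ≤ u.sup Prod.snd)) :
    IsPartialIso (insert (a, b) s) := by
  intro t ht u hu
  rw [← Finset.mem_powerset, Finset.powerset_insert, Finset.mem_union, Finset.mem_image] at ht hu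
  simp only [Finset.mem_powerset] at ht hu
  rcases ht with ht | ⟨t, ht, rfl⟩ <;> rcases hu with hu | ⟨u, hu, rfl⟩
  · exact hs t ht u hu
  · rw [sup_insert, sup_insert, ← sdiff_le_iff, ← sdiff_le_iff]
    exact (h t ht u hu).2
  · rw [inf_insert, inf_insert, inf_comm a, inf_comm b]
    exact (h t ht u hu).1
  · simp only [inf_insert, sup_insert]
    exact iff_of_true (inf_le_left.trans le_sup_left) (inf_le_left.trans le_sup_left)

theorem exists_insert_right (hβ : ∀ a : β, ⊥ < a → ∃ b : β, ⊥ < b ∧ b < a) (hs : IsPartialIso s)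
    (a : α) : ∃ b : β, IsPartialIso (insert (a, b) s) := by
  have hcell : ∀ w ∈ s.powerset, cell Prod.fst s w = ⊥ ↔ cell Prod.snd s w = ⊥ :=
    fun w hw => by
      rw [cell, cell, sdiff_eq_bot_iff, sdiff_eq_bot_iff]
      exact hs w (Finset.mem_powerset.1 hw) (s \ w) sdiff_subset
  choose! y hy using fun w hw => exists_disjoint_iff_and_disjoint_compl_iff hβ (hcell w hw) a
  set b := s.powerset.sup fun w => cell Prod.snd s w ⊓ y w
  have hb : ∀ w ∈ s.powerset, cell Prod.snd s w ⊓ b = cell Prod.snd s w ⊓ y w := fun w hw =>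
    inf_sup_inf_of_pairwiseDisjoint (pairwiseDisjoint_cell _ s) y hw
  have hb₁ : ∀ w ∈ s.powerset, Disjoint (cell Prod.snd s w) b ↔
      Disjoint (cell Prod.snd s w) (y w) := fun w hw => by rw [disjoint_iff, hb w hw, disjoint_iff]
  have hb₂ : ∀ w ∈ s.powerset, Disjoint (cell Prod.snd s w) bᶜ ↔
      Disjoint (cell Prod.snd s w) (y w)ᶜ := fun w hw => by
    rw [disjoint_compl_right_iff, disjoint_compl_right_iff, ← inf_eq_left, hb w hw, inf_eq_left]
  refine ⟨b, hs.insert_of_forall_iff fun t ht u hu => ⟨?_, ?_⟩⟩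
  · rw [inf_le_sup_iff_forall_disjoint_cell a ht hu, inf_le_sup_iff_forall_disjoint_cell b ht hu]
    refine forall₂_congr fun w hw => ?_
    rw [(hy w (Finset.mem_powerset.2 hw)).1, hb₁ w (Finset.mem_powerset.2 hw)]
  · rw [_root_.sdiff_eq, _root_.sdiff_eq, inf_le_sup_iff_forall_disjoint_cell aᶜ ht hu,
      inf_le_sup_iff_forall_disjoint_cell bᶜ ht hu]
    refine forall₂_congr fun w hw => ?_
    rw [(hy w (Finset.mem_powerset.2 hw)).2, hb₂ w (Finset.mem_powerset.2 hw)]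

theorem exists_insert_left (hα : ∀ a : α, ⊥ < a → ∃ b : α, ⊥ < b ∧ b < a) (hs : IsPartialIso s)
    (b : β) : ∃ a : α, IsPartialIso (insert (a, b) s) := by
  obtain ⟨a, ha⟩ := hs.map_prodComm.exists_insert_right hα b
  refine ⟨a, ?_⟩
  simpa [map_insert, map_map] using ha.map_prodComm

end IsPartialIso

end PartialIso

theorem Relator.BiTotal.nonempty_orderIso {α β : Type*} [PartialOrder α] [PartialOrder β]
    {R : α → β → Prop} (hR : Relator.BiTotal R)
    (hle : ∀ a b a' b', R a b → R a' b' → (a ≤ a' ↔ b ≤ b')) : Nonempty (α ≃o β) := by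
  choose f hf using hR.1
  refine ⟨OrderIso.ofSurjective (OrderEmbedding.ofMapLEIff f fun a a' =>
    (hle _ _ _ _ (hf a) (hf a')).symm) fun b => ?_⟩
  obtain ⟨a, hab⟩ := hR.2 b
  exact ⟨a, le_antisymm ((hle _ _ _ _ (hf a) hab).1 le_rfl) ((hle _ _ _ _ hab (hf a)).1 le_rfl)⟩

section BackAndForth

variable {α β : Type*} [BooleanAlgebra α] [BooleanAlgebra β] [DecidableEq α] [DecidableEq β]

def definedAtLeft (hβ : ∀ a : β, ⊥ < a → ∃ b : β, ⊥ < b ∧ b < a) (a : α) :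
    Order.Cofinal {s : Finset (α × β) // IsPartialIso s} where
  carrier := {s | ∃ b, (a, b) ∈ s.1}
  isCofinal s :=
    let ⟨b, hb⟩ := s.2.exists_insert_right hβ a
    ⟨⟨_, hb⟩, ⟨b, mem_insert_self _ _⟩, subset_insert _ _⟩

def definedAtRight (hα : ∀ a : α, ⊥ < a → ∃ b : α, ⊥ < b ∧ b < a) (b : β) :
    Order.Cofinal {s : Finset (α × β) // IsPartialIso s} where
  carrier := {s | ∃ a, (a, b) ∈ s.1}
  isCofinal s :=
    let ⟨a, ha⟩ := s.2.exists_insert_left hα b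
    ⟨⟨_, ha⟩, ⟨a, mem_insert_self _ _⟩, subset_insert _ _⟩

end BackAndForth

/-- any two countable atomless Boolean algebras are isomorphic. -/
theorem countable_atomless_BA_iso (α β : Type*)
    [BooleanAlgebra α] [BooleanAlgebra β]
    [Countable α] [Countable β] [Infinite α] [Infinite β]
    (hα : ∀ a : α, ⊥ < a → ∃ b : α, ⊥ < b ∧ b < a)
    (hβ : ∀ a : β, ⊥ < a → ∃ b : β, ⊥ < b ∧ b < a) :
    Nonempty (α ≃o β) := by
  classical
  cases nonempty_encodable α
  cases nonempty_encodable β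
  let D := Sum.elim (definedAtLeft (α := α) hβ) (definedAtRight (β := β) hα)
  let I := Order.idealOfCofinals ⟨∅, isPartialIso_empty⟩ D
  refine Relator.BiTotal.nonempty_orderIso (R := fun a b => ∃ s ∈ I, (a, b) ∈ s.1)
    ⟨fun a => ?_, fun b => ?_⟩ ?_
  · obtain ⟨s, ⟨b, hb⟩, hs⟩ := Order.cofinal_meets_idealOfCofinals _ D (Sum.inl a)
    exact ⟨b, s, hs, hb⟩
  · obtain ⟨s, ⟨a, ha⟩, hs⟩ := Order.cofinal_meets_idealOfCofinals _ D (Sum.inr b)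
    exact ⟨a, s, hs, ha⟩
  · rintro a b a' b' ⟨s, hs, hab⟩ ⟨s', hs', hab'⟩
    obtain ⟨m, -, hsm, hs'm⟩ := I.directed _ hs _ hs'
    exact m.2.le_iff (hsm hab) (hs'm hab')
end
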